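/- arXiv:0809.0702 — 5 statements merged into one kernel-verified Lean document; each statement's English description precedes it below -/
import Mathlib

section
/- Every graph G on n vertices with minimum degree δ ≥ n/2 and n ≥ 3 is hamiltonian (contains a cycle passing through every vertex). -/
set_option linter.unusedSectionVars false
set_option maxHeartbeats 1000000

open SimpleGraph Walk List Finset

namespace DiracAux

section NoFin
variable {V : Type*} {G : SimpleGraph V}


/-- `support[i] = getVert i`. -/
lemma support_getElem' {u v : V} (p : G.Walk u v) :
    ∀ (i : ℕ) (h : i < p.support.length), p.support[i] = p.getVert i := by
  induction p with
  | nil => intro i h; simp at h; subst h; simp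
  | cons hadj q ih =>
      intro i h
      cases i with
      | zero => simp
      | succ j =>
          simp only [Walk.support_cons, Walk.getVert_cons_succ]
          simp only [Walk.support_cons, List.length_cons] at h
          simpa using ih j (by omega)

/-- Build a walk from a chain list. -/
def ofChain : ∀ (l : List V) (u v : V), List.Chain G.Adj u (l ++ [v]) → G.Walk u v
  | [], u, v, h => Walk.cons (List.isChain_cons_cons.1 h).1 Walk.nil
  | w :: l, u, v, h =>
      Walk.cons (List.chain_cons.1 h).1 (ofChain l w v (List.chain_cons.1 h).2)

lemma support_ofChain : ∀ (l : List V) (u v : V) (h : List.Chain G.Adj u (l ++ [v])),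
    (ofChain l u v h).support = u :: (l ++ [v])
  | [], u, v, h => by simp [ofChain]
  | w :: l, u, v, h => by rw [ofChain, Walk.support_cons]; exact congrArg (List.cons u) (support_ofChain l w v _)

lemma length_ofChain : ∀ (l : List V) (u v : V) (h : List.Chain G.Adj u (l ++ [v])),
    (ofChain l u v h).length = l.length + 1
  | [], u, v, h => by simp [ofChain]
  | w :: l, u, v, h => by rw [ofChain, Walk.length_cons]; exact congrArg (· + 1) (length_ofChain l w v _)

/-- In a path, an edge incident to the first vertex goes to the second vertex. -/
lemma eq_snd_of_edge_head {u v y : V} {r : G.Walk u v} (hr : r.IsPath)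
    (h : s(u, y) ∈ r.edges) : y = r.getVert 1 := by
  cases r with
  | nil => simp at h
  | cons hadj q =>
      rename_i w
      simp only [Walk.edges_cons, List.mem_cons] at h
      rcases h with h | h
      · rw [Sym2.eq_iff] at h
        rcases h with ⟨-, rfl⟩ | ⟨h1, h2⟩
        · simp [Walk.getVert_cons_succ]
        · exact absurd h1 (G.ne_of_adj hadj)
      · have hns : u ∉ q.support := (Walk.cons_isPath_iff hadj q).1 hr |>.2
        exact absurd (Walk.fst_mem_support_of_mem_edges q h) hns

variable [DecidableEq V] in
lemma length_rotate {u v : V} (c : G.Walk v v) (h : u ∈ c.support) :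
    (c.rotate _ h).length = c.length := by
  have := congr_arg Walk.length (c.take_spec h)
  simp only [Walk.length_append] at this ⊢
  simp only [Walk.rotate, Walk.length_append]
  omega


end NoFin

section DecEq
variable {V : Type*} [DecidableEq V] {G : SimpleGraph V}


lemma length_rotate' {u v : V} (c : G.Walk v v) (h : u ∈ c.support) :
    (c.rotate _ h).length = c.length := by
  have := congr_arg Walk.length (c.take_spec h)
  simp only [Walk.length_append] at this ⊢
  simp only [Walk.rotate, Walk.length_append]
  omega

lemma exists_path_of_cycle_ext {a x u : V} (c : G.Walk a a) (hc : c.IsCycle)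
    (hx : x ∈ c.support) (hu : u ∉ c.support) (hadj : G.Adj u x) :
    ∃ (d : V) (r : G.Walk u d), r.IsPath ∧ r.length = c.length := by
  set q := c.rotate _ hx with hq
  have hqc : q.IsCycle := hc.rotate hx
  have hqn : ¬ q.Nil := hqc.not_nil
  have hqtail : q.tail.support = q.support.tail := Walk.support_tail_of_not_nil q hqn
  have hqtp : q.tail.IsPath := Walk.IsPath.mk' (hqtail ▸ hqc.support_nodup)
  have hu_q : u ∉ q.support.tail := by
    intro h
    have := (Walk.support_rotate c _ hx).mem_iff.1 h
    exact hu (List.mem_of_mem_tail this)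
  refine ⟨q.getVert 1, Walk.cons hadj q.tail.reverse, ?_, ?_⟩
  · apply Walk.IsPath.cons hqtp.reverse
    rw [Walk.support_reverse, List.mem_reverse, hqtail]
    exact hu_q
  · simp only [Walk.length_cons, Walk.length_reverse]
    have := Walk.length_tail_add_one hqn
    rw [length_rotate'] at this
    omega


lemma exists_cycle_on_support {a b : V} (p : G.Walk a b) (hp : p.IsPath)
    (hk2 : 2 ≤ p.length) {i : ℕ} (hi : i < p.length)
    (hA : G.Adj a (p.getVert (i + 1))) (hB : G.Adj b (p.getVert i)) :
    ∃ c : G.Walk a a, c.IsCycle ∧ c.length = p.length + 1 ∧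
      (∀ v, v ∈ p.support ↔ v ∈ c.support) := by
  classical
  set k := p.length with hkdef
  set s := p.support with hsdef
  have slen : s.length = k + 1 := p.length_support
  have snd : s.Nodup := hp.support_nodup
  have schain : List.Chain' G.Adj s := p.isChain_adj_support
  have hshead : s = a :: p.support.tail := p.support_eq_cons
  set t1 : List V := p.support.tail.take i with ht1
  set t2 : List V := (s.drop (i + 1)).reverse with ht2
  set l : List V := t1 ++ t2 with hl
  have htail_len : p.support.tail.length = k := by
    rw [hshead] at slen; simpa using slen
  have ht1len : t1.length = i := by
    rw [ht1, List.length_take]; omega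
  have ht2len : t2.length = k - i := by
    rw [ht2, List.length_reverse, List.length_drop]; omega
  have hlen_l : l.length = k := by
    rw [hl, List.length_append, ht1len, ht2len]; omega
  have htake : s.take (i + 1) = a :: t1 := by
    rw [hshead]; rfl
  have hdrop : p.support.tail.drop i = s.drop (i + 1) := by
    rw [hshead]; rfl
  -- membership
  have hmem_l : ∀ v, v ∈ l ↔ v ∈ p.support.tail := by
    intro v
    rw [hl, List.mem_append, ht2, List.mem_reverse, ← hdrop, ht1]
    constructor
    · rintro (h | h)
      · exact List.mem_of_mem_take h
      · exact List.mem_of_mem_drop h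
    · intro h
      rw [← List.take_append_drop i p.support.tail, List.mem_append] at h
      exact h
  have hnd_l : l.Nodup := by
    have h1 : (t1 ++ p.support.tail.drop i).Nodup := by
      rw [List.take_append_drop]
      rw [hshead] at snd
      exact snd.of_cons
    rw [hl]
    have := h1
    rw [List.nodup_append] at this ⊢
    refine ⟨this.1, ?_, ?_⟩
    · rw [ht2, List.nodup_reverse, ← hdrop]; exact this.2.1
    · intro x hx y hx2
      rw [ht2, List.mem_reverse, ← hdrop] at hx2
      exact this.2.2 x hx y hx2
  have ha_not_tail : a ∉ p.support.tail := by
    rw [hshead] at snd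
    exact (List.nodup_cons.1 snd).1
  -- index facts
  have hs_i : ∀ j (h : j < s.length), s[j] = p.getVert j := fun j h => support_getElem' p j h
  have hgetLast : s.getLast? = some b := by
    rw [List.getLast?_eq_getElem?, slen]
    simp only [Nat.add_sub_cancel]
    rw [List.getElem?_eq_getElem (by omega)]
    rw [hs_i k (by omega)]
    simp [hkdef]
  have ht2ne : t2 ≠ [] := by
    intro h
    have := congr_arg List.length h
    rw [ht2len] at this
    simp at this
    omega
  have hiS : i < s.length := by omega
  have hi1S : i + 1 < s.length := by omega
  -- the chain
  have hC2 : List.Chain' G.Adj t2 := by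
    rw [ht2, List.Chain', List.isChain_reverse]
    exact (schain.drop (i + 1)).imp fun _ _ h => h.symm
  have ht2_getLast : t2.getLast? = some (p.getVert (i + 1)) := by
    rw [ht2, List.getLast?_reverse, List.head?_drop, List.getElem?_eq_getElem hi1S,
      hs_i (i + 1) hi1S]
  have ht2_head : t2.head? = some b := by
    rw [ht2, List.head?_reverse]
    have : (List.drop (i + 1) s).getLast? = s.getLast? := by
      conv_rhs => rw [← List.take_append_drop (i + 1) s]
      rw [List.getLast?_append_of_ne_nil]
      intro h
      have := congr_arg List.length h
      rw [List.length_drop] at this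
      simp at this
      omega
    rw [this, hgetLast]
  have htake_getLast : (a :: t1).getLast? = some (p.getVert i) := by
    rw [← htake, List.take_succ, List.getElem?_eq_getElem hiS, hs_i i hiS]
    simp [List.getLast?_concat]
  have hC3 : List.Chain' G.Adj (t2 ++ [a]) := by
    rw [List.Chain', List.isChain_append]
    refine ⟨hC2, List.isChain_singleton a, ?_⟩
    intro x hx y hy
    rw [ht2_getLast] at hx
    simp at hx hy
    subst hx; subst hy
    exact hA.symm
  have hchain' : List.Chain' G.Adj ((a :: t1) ++ (t2 ++ [a])) := by
    rw [List.Chain', List.isChain_append]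
    refine ⟨htake ▸ schain.take (i + 1), hC3, ?_⟩
    intro x hx y hy
    rw [htake_getLast] at hx
    rw [List.head?_append_of_ne_nil _ ht2ne, ht2_head] at hy
    simp at hx hy
    subst hx; subst hy
    exact hB.symm
  have hchain : List.Chain G.Adj a (l ++ [a]) := by
    have : (a :: t1) ++ (t2 ++ [a]) = a :: (l ++ [a]) := by simp [hl]
    rw [this] at hchain'
    exact hchain'
  -- the cycle
  set c : G.Walk a a := ofChain l a a hchain with hc
  have hsupc : c.support = a :: (l ++ [a]) := support_ofChain l a a hchain
  have hlenc : c.length = k + 1 := by rw [hc, length_ofChain, hlen_l]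
  have hnnil : ¬ c.Nil := by
    rw [Walk.nil_iff_length_eq, hlenc]
    omega
  have htailsup : c.tail.support = l ++ [a] := by
    rw [Walk.support_tail_of_not_nil c hnnil, hsupc]
    rfl
  have ha_not_l : a ∉ l := fun h => ha_not_tail ((hmem_l a).1 h)
  have htailpath : c.tail.IsPath := by
    apply Walk.IsPath.mk'
    rw [htailsup, List.nodup_append]
    exact ⟨hnd_l, List.nodup_singleton a, by intro x hx y hy; simp at hy; subst hy; exact fun h => ha_not_l (h ▸ hx)⟩
  have hsupclen : c.support.length = k + 2 := by
    rw [c.length_support, hlenc]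
  have hgv1 : c.getVert 1 = l[0]'(by omega) := by
    rw [← support_getElem' c 1 (by omega)]
    have h0l : 0 < l.length := by omega
    simp [hsupc, List.getElem_append, h0l]
  have hedge : s(a, c.getVert 1) ∉ c.tail.edges := by
    intro hmem
    have hrpath : c.tail.reverse.IsPath := htailpath.reverse
    have hmem' : s(a, c.getVert 1) ∈ c.tail.reverse.edges := by
      rw [Walk.edges_reverse, List.mem_reverse]
      exact hmem
    have heq := eq_snd_of_edge_head hrpath hmem'
    have hrsup : c.tail.reverse.support = a :: l.reverse := by
      rw [Walk.support_reverse, htailsup]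
      simp
    have hrlen : c.tail.reverse.support.length = k + 1 := by
      rw [hrsup]; simp [hlen_l]
    have hr1 : c.tail.reverse.getVert 1 = l[k - 1]'(by omega) := by
      rw [← support_getElem' c.tail.reverse 1 (by omega)]
      have : 0 < l.reverse.length := by simp [hlen_l]; omega
      simp only [hrsup]
      simp [List.getElem_reverse, hlen_l]
    have heq2 := hgv1.symm.trans (heq.trans hr1)
    have := (hnd_l.getElem_inj_iff).1 heq2
    omega
  have hcycle : c.IsCycle := by
    rw [← Walk.cons_tail_eq c hnnil, Walk.cons_isCycle_iff]
    exact ⟨htailpath, hedge⟩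
  refine ⟨c, hcycle, hlenc, fun v => ?_⟩
  rw [hsupc]
  simp only [List.mem_cons, List.mem_append, List.mem_singleton]
  rw [hmem_l v]
  have hvs : v ∈ p.support ↔ v = a ∨ v ∈ p.support.tail := by
    conv_lhs => rw [p.support_eq_cons]
    exact List.mem_cons
  rw [hvs]
  tauto


end DecEq

section Fin
variable {V : Type*} [Fintype V] [DecidableEq V] {G : SimpleGraph V}


lemma exists_max_path [Nonempty V] (G : SimpleGraph V) :
    ∃ (a b : V) (p : G.Walk a b), p.IsPath ∧
      ∀ (c d : V) (q : G.Walk c d), q.IsPath → q.length ≤ p.length := by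
  classical
  set L : Set ℕ := {l | ∃ (a b : V) (p : G.Walk a b), p.IsPath ∧ p.length = l} with hL
  have h0 : 0 ∈ L := ⟨Classical.arbitrary V, _, Walk.nil, Walk.IsPath.nil, rfl⟩
  have hbdd : ∀ l ∈ L, l ≤ Fintype.card V := by
    rintro l ⟨a, b, p, hp, rfl⟩
    exact hp.length_lt.le
  have hmem : sSup L ∈ L := Nat.sSup_mem ⟨0, h0⟩ ⟨Fintype.card V, hbdd⟩
  obtain ⟨a, b, p, hp, hlen⟩ := hmem
  refine ⟨a, b, p, hp, fun c d q hq => ?_⟩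
  rw [hlen]
  exact le_csSup ⟨Fintype.card V, hbdd⟩ ⟨c, d, q, hq, rfl⟩

lemma exists_length_two_path [DecidableRel G.Adj] [Nonempty V]
    (hδ : 2 ≤ G.minDegree) :
    ∃ (a b : V) (p : G.Walk a b), p.IsPath ∧ p.length = 2 := by
  obtain ⟨v⟩ := ‹Nonempty V›
  have hv : 0 < (G.neighborFinset v).card := by
    rw [card_neighborFinset_eq_degree]
    exact lt_of_lt_of_le (by omega) (G.minDegree_le_degree v)
  obtain ⟨w, hw⟩ := Finset.card_pos.1 hv
  rw [mem_neighborFinset] at hw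
  have hw2 : 1 < (G.neighborFinset w).card := by
    rw [card_neighborFinset_eq_degree]
    exact lt_of_lt_of_le (by omega) (G.minDegree_le_degree w)
  obtain ⟨u, hu, huv⟩ := Finset.exists_mem_ne hw2 v
  rw [mem_neighborFinset] at hu
  refine ⟨v, u, Walk.cons hw (Walk.cons hu Walk.nil), ?_, rfl⟩
  rw [Walk.isPath_def]
  simp only [Walk.support_cons, Walk.support_nil, List.nodup_cons, List.mem_cons,
    List.mem_singleton, List.not_mem_nil, or_false, not_or, List.nodup_nil, and_true]
  exact ⟨⟨G.ne_of_adj hw, huv.symm⟩, G.ne_of_adj hu, not_false⟩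

lemma exists_crossing_edge [DecidableRel G.Adj]
    (hδ : 2 * G.minDegree ≥ Fintype.card V) (S : Finset V)
    (hS : S.Nonempty) (hS' : Sᶜ.Nonempty) :
    ∃ x ∈ S, ∃ u ∉ S, G.Adj x u := by
  by_contra hno
  push_neg at hno
  obtain ⟨a, ha⟩ := hS
  obtain ⟨w, hw⟩ := hS'
  rw [Finset.mem_compl] at hw
  have hna : G.neighborFinset a ⊆ S.erase a := by
    intro v hv
    rw [mem_neighborFinset] at hv
    refine Finset.mem_erase.2 ⟨(G.ne_of_adj hv).symm, ?_⟩
    by_contra hvS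
    exact hno a ha v hvS hv
  have hnw : G.neighborFinset w ⊆ Sᶜ.erase w := by
    intro v hv
    rw [mem_neighborFinset] at hv
    refine Finset.mem_erase.2 ⟨(G.ne_of_adj hv).symm, Finset.mem_compl.2 fun hvS => ?_⟩
    exact hno v hvS w hw hv.symm
  have h1 : G.degree a ≤ S.card - 1 := by
    have := Finset.card_le_card hna
    rwa [card_neighborFinset_eq_degree, Finset.card_erase_of_mem ha] at this
  have h2 : G.degree w ≤ Sᶜ.card - 1 := by
    have := Finset.card_le_card hnw
    rwa [card_neighborFinset_eq_degree, Finset.card_erase_of_mem (Finset.mem_compl.2 hw)] at this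
  have hca : 0 < S.card := Finset.card_pos.2 ⟨a, ha⟩
  have hcw : 0 < Sᶜ.card := Finset.card_pos.2 ⟨w, Finset.mem_compl.2 hw⟩
  have hsum : S.card + Sᶜ.card = Fintype.card V := Finset.card_add_card_compl S
  have hda := G.minDegree_le_degree a
  have hdw := G.minDegree_le_degree w
  omega





lemma pigeonhole [DecidableRel G.Adj]
    (hδ : 2 * G.minDegree ≥ Fintype.card V) {a b : V} (p : G.Walk a b) (hp : p.IsPath)
    (hNa : ∀ v, G.Adj a v → v ∈ p.support) (hNb : ∀ v, G.Adj b v → v ∈ p.support) :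
    ∃ i < p.length, G.Adj a (p.getVert (i + 1)) ∧ G.Adj b (p.getVert i) := by
  classical
  set k := p.length with hk
  set s := p.support with hs
  have slen : s.length = k + 1 := p.length_support
  have snd : s.Nodup := hp.support_nodup
  set A : Finset ℕ := (Finset.range k).filter (fun i => G.Adj a (p.getVert (i + 1))) with hA
  set B : Finset ℕ := (Finset.range k).filter (fun i => G.Adj b (p.getVert i)) with hB
  have hgetVert : ∀ v ∈ s, p.getVert (s.idxOf v) = v := by
    intro v hv
    have hlt : s.idxOf v < s.length := List.idxOf_lt_length_iff.2 hv
    rw [← support_getElem' p _ hlt]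
    exact List.getElem_idxOf hlt
  have hcardA : G.degree a ≤ A.card := by
    rw [← card_neighborFinset_eq_degree]
    apply Finset.card_le_card_of_injOn (fun v => s.idxOf v - 1)
    · intro v hv
      rw [Finset.mem_coe, mem_neighborFinset] at hv
      have hvs : v ∈ s := hNa v hv
      have hlt : s.idxOf v < s.length := List.idxOf_lt_length_iff.2 hvs
      have hne : s.idxOf v ≠ 0 := by
        intro h0
        have : p.getVert 0 = v := by rw [← h0]; exact hgetVert v hvs
        rw [p.getVert_zero] at this
        exact (G.ne_of_adj hv) this
      refine Finset.mem_filter.2 ⟨Finset.mem_range.2 (by dsimp only; omega), ?_⟩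
      have : s.idxOf v - 1 + 1 = s.idxOf v := by omega
      rw [this, hgetVert v hvs]
      exact hv
    · intro v1 h1 v2 h2 heq
      simp only [Finset.coe_sort_coe, Finset.mem_coe, mem_neighborFinset] at h1 h2
      have hv1 : v1 ∈ s := hNa v1 h1
      have hv2 : v2 ∈ s := hNa v2 h2
      have hne1 : s.idxOf v1 ≠ 0 := by
        intro h0
        have : p.getVert 0 = v1 := by rw [← h0]; exact hgetVert v1 hv1
        rw [p.getVert_zero] at this
        exact (G.ne_of_adj h1) this
      have hne2 : s.idxOf v2 ≠ 0 := by
        intro h0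
        have : p.getVert 0 = v2 := by rw [← h0]; exact hgetVert v2 hv2
        rw [p.getVert_zero] at this
        exact (G.ne_of_adj h2) this
      have heq' : s.idxOf v1 - 1 = s.idxOf v2 - 1 := heq
      have : s.idxOf v1 = s.idxOf v2 := by omega
      rw [← hgetVert v1 hv1, ← hgetVert v2 hv2, this]
  have hcardB : G.degree b ≤ B.card := by
    rw [← card_neighborFinset_eq_degree]
    apply Finset.card_le_card_of_injOn (fun v => s.idxOf v)
    · intro v hv
      rw [Finset.mem_coe, mem_neighborFinset] at hv
      have hvs : v ∈ s := hNb v hv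
      have hlt : s.idxOf v < s.length := List.idxOf_lt_length_iff.2 hvs
      have hne : s.idxOf v ≠ k := by
        intro h0
        have : p.getVert k = v := by rw [← h0]; exact hgetVert v hvs
        rw [hk, p.getVert_length] at this
        exact (G.ne_of_adj hv) this
      refine Finset.mem_filter.2 ⟨Finset.mem_range.2 (by dsimp only; omega), ?_⟩
      rw [hgetVert v hvs]
      exact hv
    · intro v1 h1 v2 h2 heq
      simp only [Finset.coe_sort_coe, Finset.mem_coe, mem_neighborFinset] at h1 h2
      have heq' : s.idxOf v1 = s.idxOf v2 := heq
      rw [← hgetVert v1 (hNb v1 h1), ← hgetVert v2 (hNb v2 h2), heq']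
  have hk_lt : k + 1 ≤ Fintype.card V := by
    have := snd.length_le_card
    omega
  have hunion : (A ∪ B).card ≤ k := by
    calc (A ∪ B).card ≤ (Finset.range k).card := Finset.card_le_card (by
          intro i hi
          rcases Finset.mem_union.1 hi with h | h
          · exact (Finset.mem_filter.1 h).1
          · exact (Finset.mem_filter.1 h).1)
      _ = k := Finset.card_range k
  have hdega := G.minDegree_le_degree a
  have hdegb := G.minDegree_le_degree b
  have hinter : 0 < (A ∩ B).card := by
    have := Finset.card_union_add_card_inter A B
    omega
  obtain ⟨i, hi⟩ := Finset.card_pos.1 hinter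
  rw [Finset.mem_inter] at hi
  obtain ⟨hiA, hiB⟩ := hi
  exact ⟨i, Finset.mem_range.1 (Finset.mem_filter.1 hiA).1, (Finset.mem_filter.1 hiA).2,
    (Finset.mem_filter.1 hiB).2⟩


end Fin

end DiracAux

open DiracAux in
/-- **Dirac's theorem.** Every graph on `n ≥ 3` vertices with minimum degree
`δ ≥ n / 2` is hamiltonian. -/
theorem dirac_hamiltonian {V : Type*} [Fintype V] [DecidableEq V] (G : SimpleGraph V)
    [DecidableRel G.Adj] (hn : 3 ≤ Fintype.card V)
    (hδ : 2 * G.minDegree ≥ Fintype.card V) :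
    G.IsHamiltonian := by
  intro _
  have : 0 < Fintype.card V := by omega
  haveI : Nonempty V := Fintype.card_pos_iff.1 this
  have hδ2 : 2 ≤ G.minDegree := by omega
  obtain ⟨a, b, p, hp, hmax⟩ := exists_max_path G
  have hk2 : 2 ≤ p.length := by
    obtain ⟨c, d, q, hq, hq2⟩ := exists_length_two_path (G := G) hδ2
    have := hmax c d q hq
    omega
  have hNa : ∀ v, G.Adj a v → v ∈ p.support := by
    intro v hv
    by_contra hvs
    have hpath : (Walk.cons hv.symm p).IsPath := hp.cons hvs
    have := hmax _ _ _ hpath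
    simp [Walk.length_cons] at this
  have hNb : ∀ v, G.Adj b v → v ∈ p.support := by
    intro v hv
    by_contra hvs
    have hvs' : v ∉ p.reverse.support := by
      rwa [Walk.support_reverse, List.mem_reverse]
    have hpath : (Walk.cons hv.symm p.reverse).IsPath := hp.reverse.cons hvs'
    have := hmax _ _ _ hpath
    simp [Walk.length_cons] at this
  obtain ⟨i, hi, hA, hB⟩ := pigeonhole hδ p hp hNa hNb
  obtain ⟨c, hcycle, hclen, hsupiff⟩ := exists_cycle_on_support p hp hk2 hi hA hB
  have hall : ∀ v, v ∈ c.support := by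
    by_contra hno
    push_neg at hno
    obtain ⟨w, hw⟩ := hno
    have hSne : (c.support.toFinset : Finset V).Nonempty :=
      ⟨a, List.mem_toFinset.2 c.start_mem_support⟩
    have hScne : (c.support.toFinsetᶜ : Finset V).Nonempty :=
      ⟨w, Finset.mem_compl.2 fun h => hw (List.mem_toFinset.1 h)⟩
    obtain ⟨x, hx, u, hu, hadj⟩ := exists_crossing_edge hδ c.support.toFinset hSne hScne
    obtain ⟨d, r, hr, hrlen⟩ := exists_path_of_cycle_ext c hcycle
      (List.mem_toFinset.1 hx) (fun h => hu (List.mem_toFinset.2 h)) hadj.symm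
    have := hmax _ _ _ hr
    rw [hrlen, hclen] at this
    omega
  refine ⟨a, c, Walk.isHamiltonianCycle_isCycle_and_isHamiltonian_tail.2 ⟨hcycle, ?_⟩⟩
  have hnnil : ¬ c.Nil := hcycle.not_nil
  have htailsup : c.tail.support = c.support.tail := Walk.support_tail_of_not_nil c hnnil
  have htailpath : c.tail.IsPath := Walk.IsPath.mk' (htailsup ▸ hcycle.support_nodup)
  apply htailpath.isHamiltonian_of_mem
  intro v
  rw [htailsup]
  have hv := hall v
  have htne : c.support.tail ≠ [] := by
    intro h
    have h2 := c.length_support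
    rw [c.support_eq_cons, h] at h2
    have h3 := hcycle.three_le_length
    simp only [List.length_cons, List.length_nil] at h2
    omega
  rcases List.mem_cons.1 (c.support_eq_cons ▸ hv) with rfl | h
  · have hlast : c.support.tail.getLast htne = v := by
      rw [List.getLast_tail]
      exact c.getLast_support
    have hm := List.getLast_mem htne
    rwa [hlast] at hm
  · exact h
end

section
/- Every 2-connected graph G contains a cycle of length at least min{n, 2δ}. -/
/-- A set `S` of vertices is a cut-set of `G` if deleting it leaves a graph that is
disconnected or has at most one vertex. -/
def SimpleGraph.IsCutSet {V : Type*} [Fintype V] (G : SimpleGraph V) (S : Set V) : Prop :=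
  ¬ (G.induce Sᶜ).Connected ∨ Sᶜ.ncard ≤ 1

/-- The vertex connectivity of `G`: the least size of a cut-set. -/
noncomputable def SimpleGraph.vConn {V : Type*} [Fintype V] (G : SimpleGraph V) : ℕ :=
  sInf {k | ∃ S : Set V, G.IsCutSet S ∧ S.ncard = k}

/-- The independence number of `G`. -/
noncomputable def SimpleGraph.indepNum' {V : Type*} [Fintype V] (G : SimpleGraph V) : ℕ :=
  sSup {n | ∃ s : Finset V, s.card = n ∧ ∀ x ∈ s, ∀ y ∈ s, x ≠ y → ¬ G.Adj x y}

/-- The neighborhood `N(X)` of a set of vertices. -/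
def SimpleGraph.nbhdSet {V : Type*} (G : SimpleGraph V) (X : Set V) : Set V :=
  {v | v ∉ X ∧ ∃ x ∈ X, G.Adj x v}

/-- `X` is a fragment of `G`: `N(X)` is a minimum cut-set and
`V(G) − (X ∪ N(X))` is nonempty. -/
def SimpleGraph.IsFragment {V : Type*} [Fintype V] (G : SimpleGraph V) (X : Set V) : Prop :=
  G.IsCutSet (G.nbhdSet X) ∧ (G.nbhdSet X).ncard = G.vConn ∧ ((X ∪ G.nbhdSet X)ᶜ).Nonempty

/-- An endfragment: a fragment containing no other fragment as a proper subset. -/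
def SimpleGraph.IsEndFragment {V : Type*} [Fintype V] (G : SimpleGraph V) (A : Set V) : Prop :=
  G.IsFragment A ∧ ∀ B : Set V, G.IsFragment B → B ⊆ A → B = A

/-- `G` has a cycle of length at least `k`. -/
def SimpleGraph.HasCycleOfLengthAtLeast {V : Type*} (G : SimpleGraph V) (k : ℕ) : Prop :=
  ∃ (u : V) (c : G.Walk u u), c.IsCycle ∧ k ≤ c.length


namespace DiracAux
open List

variable {V : Type*}

/-- A nonempty list of ≥ 3 distinct vertices forming a cycle in `G`. -/
def IsCycleList (G : SimpleGraph V) (l : List V) : Prop :=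
  3 ≤ l.length ∧ l.Nodup ∧ List.IsChain G.Adj (l ++ l.head?.toList)

/-- Build a walk out of a chain. -/
def walkOfChain (G : SimpleGraph V) : (a : V) → (l : List V) →
    List.Chain G.Adj a l → G.Walk a (l.getLastD a)
  | _, [], _ => SimpleGraph.Walk.nil
  | a, b :: l, h =>
      ((SimpleGraph.Walk.cons ((List.chain_cons.1 h).1)
        (walkOfChain G b l (List.chain_cons.1 h).2)).copy rfl
          (List.getLastD_cons).symm)

lemma walkOfChain_support (G : SimpleGraph V) : ∀ (a : V) (l : List V)
    (h : List.Chain G.Adj a l), (walkOfChain G a l h).support = a :: l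
  | _, [], _ => rfl
  | a, b :: l, h => by
      simp only [walkOfChain, SimpleGraph.Walk.support_copy, SimpleGraph.Walk.support_cons]
      rw [walkOfChain_support G b l (List.chain_cons.1 h).2]

lemma walkOfChain_length (G : SimpleGraph V) : ∀ (a : V) (l : List V)
    (h : List.Chain G.Adj a l), (walkOfChain G a l h).length = l.length
  | _, [], _ => rfl
  | a, b :: l, h => by
      simp only [walkOfChain, SimpleGraph.Walk.length_copy, SimpleGraph.Walk.length_cons]
      rw [walkOfChain_length G b l (List.chain_cons.1 h).2, List.length_cons]

lemma not_mem_edges_of_isPath {G : SimpleGraph V} {u v : V} (p : G.Walk v u)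
    (hp : p.IsPath) (hlen : 2 ≤ p.length) : s(u, v) ∉ p.edges := by
  intro hmem
  cases p with
  | nil => simp at hlen
  | @cons _ w _ h q =>
    rw [SimpleGraph.Walk.edges_cons, List.mem_cons] at hmem
    have hnd := hp.support_nodup
    rw [SimpleGraph.Walk.support_cons, List.nodup_cons] at hnd
    rcases hmem with heq | hmem
    · rw [Sym2.eq_iff] at heq
      rcases heq with ⟨rfl, rfl⟩ | ⟨rfl, -⟩
      · exact hnd.1 (q.end_mem_support)
      · cases q with
        | nil => simp at hlen
        | cons h' q' =>
          have : u ∈ q'.support := q'.end_mem_support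
          have hnd2 := hnd.2
          rw [SimpleGraph.Walk.support_cons, List.nodup_cons] at hnd2
          exact hnd2.1 this
    · exact hnd.1 (SimpleGraph.Walk.snd_mem_support_of_mem_edges q hmem)

lemma IsCycleList.hasCycle {G : SimpleGraph V} {l : List V} (h : IsCycleList G l) :
    ∃ (u : V) (c : G.Walk u u), c.IsCycle ∧ c.length = l.length := by
  obtain ⟨hlen, hnd, hch⟩ := h
  match l, hlen with
  | a :: b :: t, hlen =>
    simp only [List.head?_cons, Option.toList_some, List.cons_append] at hch
    have h1 : G.Adj a b := (List.isChain_cons_cons.1 hch).1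
    have h2 : List.Chain G.Adj b (t ++ [a]) := (List.isChain_cons_cons.1 hch).2
    have hend : (t ++ [a]).getLastD b = a := List.getLastD_concat
    have ht1 : 1 ≤ t.length := by
      simp only [List.length_cons] at hlen; omega
    let p : G.Walk b a := (walkOfChain G b (t ++ [a]) h2).copy rfl hend
    have hsupp : p.support = b :: (t ++ [a]) := by
      simp only [p, SimpleGraph.Walk.support_copy]
      exact walkOfChain_support G b (t ++ [a]) h2
    have hpath : p.IsPath := by
      rw [SimpleGraph.Walk.isPath_def, hsupp]
      have hperm : (b :: (t ++ [a])).Perm (a :: b :: t) :=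
        ((List.perm_append_singleton a t).cons b).trans (List.Perm.swap a b t)
      exact hperm.symm.nodup hnd
    have hplen : p.length = t.length + 1 := by
      simp only [p, SimpleGraph.Walk.length_copy]
      rw [walkOfChain_length]; simp
    refine ⟨a, SimpleGraph.Walk.cons h1 p, ?_, ?_⟩
    · rw [SimpleGraph.Walk.cons_isCycle_iff]
      exact ⟨hpath, not_mem_edges_of_isPath p hpath (by omega)⟩
    · simp only [SimpleGraph.Walk.length_cons, hplen, List.length_cons]

lemma IsCycleList.rotate_one {G : SimpleGraph V} {a : V} {t : List V}
    (h : IsCycleList G (a :: t)) : IsCycleList G (t ++ [a]) := by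
  obtain ⟨hlen, hnd, hch⟩ := h
  match t, hlen with
  | b :: t', hlen =>
    have hperm : ((b :: t') ++ [a]).Perm (a :: b :: t') :=
      List.perm_append_singleton a (b :: t')
    refine ⟨by simp only [List.length_append, List.length_cons] at hlen ⊢; omega,
      hperm.symm.nodup hnd, ?_⟩
    simp only [List.head?_cons, Option.toList_some, List.cons_append] at hch ⊢
    have h1 : G.Adj a b := (List.isChain_cons_cons.1 hch).1
    have h2 : List.IsChain G.Adj (b :: (t' ++ [a])) := (List.isChain_cons_cons.1 hch).2
    have hhd : ((b :: t') ++ [a]).head? = some b := rfl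
    rw [show b :: (t' ++ [a] ++ [b]) = (b :: (t' ++ [a])) ++ [b] by simp]
    rw [List.isChain_append]
    refine ⟨h2, List.isChain_singleton b, ?_⟩
    intro x hx y hy
    simp only [List.head?_cons, Option.mem_def, Option.some.injEq] at hy
    subst hy
    have : ((b :: t') ++ [a]).getLast? = some a := by
      rw [List.getLast?_append]; rfl
    simp only [List.cons_append] at this hx
    rw [this] at hx
    simp only [Option.mem_def, Option.some.injEq] at hx
    subst hx
    exact h1

lemma IsCycleList.rotate {G : SimpleGraph V} {l : List V}
    (h : IsCycleList G l) (n : ℕ) : IsCycleList G (l.rotate n) := by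
  induction n with
  | zero => simpa using h
  | succ m ih =>
    rw [← List.rotate_rotate l m 1]
    have h3 := ih.1
    match hl : l.rotate m, h3 with
    | a :: t, _ =>
      rw [List.rotate_cons_succ, List.rotate_zero]
      rw [hl] at ih
      exact ih.rotate_one

lemma exists_nodup_chain' {α : Type*} {R : α → α → Prop} (l : List α) (h : List.IsChain R l) :
    ∃ l', l'.Nodup ∧ List.IsChain R l' ∧ l'.head? = l.head? ∧ l'.getLast? = l.getLast? ∧
      ∀ v ∈ l', v ∈ l := by
  suffices H : ∀ (n : ℕ) (l : List α), List.IsChain R l → l.length = n →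
      ∃ l', l'.Nodup ∧ List.IsChain R l' ∧ l'.head? = l.head? ∧ l'.getLast? = l.getLast? ∧
        ∀ v ∈ l', v ∈ l by exact H l.length l h rfl
  intro n
  induction n using Nat.strong_induction_on with
  | _ n ih =>
  intro l h hn
  subst hn
  match l, h with
  | [], _ => exact ⟨[], by simp⟩
  | a :: t, h =>
    by_cases ha : a ∈ t
    · obtain ⟨u, v, rfl⟩ := List.append_of_mem ha
      have hsuf : (a :: v) <:+ (a :: (u ++ a :: v)) := ⟨a :: u, by simp⟩
      have hch : List.IsChain R (a :: v) := h.suffix hsuf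
      have hlen : (a :: v).length < (a :: (u ++ a :: v)).length := by simp
      obtain ⟨l', h1, h2, h3, h4, h5⟩ := ih _ hlen _ hch rfl
      refine ⟨l', h1, h2, by rw [h3]; rfl, ?_, ?_⟩
      · rw [h4, show a :: (u ++ a :: v) = (a :: u) ++ (a :: v) by simp,
          List.getLast?_append]
        cases hv : (a :: v).getLast? with
        | none => simp at hv
        | some w => simp
      · intro w hw
        have := h5 w hw
        simp only [List.mem_cons, List.mem_append] at this ⊢
        tauto
    · have hch : List.IsChain R t := h.tail
      obtain ⟨t', h1, h2, h3, h4, h5⟩ := ih t.length (by simp) t hch rfl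
      refine ⟨a :: t', List.nodup_cons.2 ⟨fun hc => ha (h5 a hc), h1⟩, ?_, rfl, ?_, ?_⟩
      · rw [List.isChain_cons]
        refine ⟨fun y hy => ?_, h2⟩
        rw [h3] at hy
        exact (List.isChain_cons.1 h).1 y hy
      · cases t with
        | nil =>
          have : t' = [] := List.getLast?_eq_none_iff.1 (by simpa using h4)
          subst this; rfl
        | cons b s =>
          cases t' with
          | nil =>
            exfalso
            have : (b :: s).getLast? = none := h4.symm
            simp [List.getLast?_eq_none_iff] at this
          | cons c s' =>
            rw [List.getLast?_cons_cons, List.getLast?_cons_cons]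
            exact h4
      · intro w hw
        rcases List.mem_cons.1 hw with rfl | hw
        · exact List.mem_cons_self
        · exact List.mem_cons_of_mem _ (h5 w hw)

/-! ### Segments of a path function -/

def seg (x : ℕ → V) (s t : ℕ) : List V := (List.range' s (t + 1 - s)).map x

lemma mem_seg {x : ℕ → V} {s t : ℕ} {v : V} :
    v ∈ seg x s t ↔ ∃ r, s ≤ r ∧ r ≤ t ∧ x r = v := by
  simp only [seg, List.mem_map, List.mem_range'_1]
  constructor
  · rintro ⟨a, ⟨h1, h2⟩, rfl⟩; exact ⟨a, h1, by omega, rfl⟩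
  · rintro ⟨r, h1, h2, rfl⟩; exact ⟨r, ⟨h1, by omega⟩, rfl⟩

lemma length_seg {x : ℕ → V} {s t : ℕ} : (seg x s t).length = t + 1 - s := by
  simp [seg]

lemma seg_eq_nil {x : ℕ → V} {s t : ℕ} (h : t < s) : seg x s t = [] := by
  have : t + 1 - s = 0 := by omega
  simp [seg, this]

lemma head?_seg {x : ℕ → V} {s t : ℕ} (h : s ≤ t) : (seg x s t).head? = some (x s) := by
  rw [seg, show t + 1 - s = (t - s) + 1 by omega, List.range'_succ]
  rfl

lemma seg_concat {x : ℕ → V} {s t : ℕ} (h : s < t) :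
    seg x s t = seg x s (t - 1) ++ [x t] := by
  rw [seg, seg, show t + 1 - s = (t - s) + 1 by omega, List.range'_concat, List.map_append]
  simp only [one_mul]
  rw [show s + (t - s) = t by omega, show t - 1 + 1 - s = t - s by omega]
  simp

lemma getLast?_seg {x : ℕ → V} {s t : ℕ} (h : s ≤ t) :
    (seg x s t).getLast? = some (x t) := by
  rcases eq_or_lt_of_le h with rfl | h
  · rw [seg, show s + 1 - s = 1 by omega]; rfl
  · rw [seg_concat h, List.getLast?_concat]

lemma chain'_range' {S : ℕ → ℕ → Prop} :
    ∀ (n s : ℕ), (∀ r, s ≤ r → r + 1 < s + n → S r (r + 1)) → List.IsChain S (List.range' s n)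
  | 0, s, _ => by simp
  | 1, s, _ => by simp
  | (n+2), s, h => by
    rw [List.range'_succ]
    have h2 := chain'_range' (n+1) (s+1) (fun r hr hrn => h r (by omega) (by omega))
    rw [List.range'_succ] at h2 ⊢
    exact List.isChain_cons_cons.2 ⟨h s le_rfl (by omega), h2⟩

lemma chain'_seg {G : SimpleGraph V} {x : ℕ → V} {s t : ℕ}
    (h : ∀ r, s ≤ r → r < t → G.Adj (x r) (x (r + 1))) : List.IsChain G.Adj (seg x s t) := by
  rw [seg]
  apply (List.isChain_map _).2
  exact chain'_range' _ _ (fun r hr hrn => h r hr (by omega))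

lemma nodup_seg {x : ℕ → V} {k s t : ℕ} (ht : t ≤ k)
    (hinj : ∀ r q, r ≤ k → q ≤ k → x r = x q → r = q) : (seg x s t).Nodup := by
  rw [seg]
  refine (List.nodup_range' 1).map_on ?_
  intro a ha b hb hab
  rw [List.mem_range'_1] at ha hb
  exact hinj a b (by omega) (by omega) hab

lemma chain'_reverse_adj {G : SimpleGraph V} {l : List V} (h : List.IsChain G.Adj l) :
    List.IsChain G.Adj l.reverse :=
  List.isChain_reverse.2 (h.imp fun _ _ hab => hab.symm)

lemma exists_adj_boundary_list {R : V → V → Prop} (l : List V) :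
    ∀ (w : List V), List.IsChain R w → (∀ a, w.head? = some a → a ∈ l) →
      (∃ b ∈ w, b ∉ l) → ∃ a b, a ∈ l ∧ b ∉ l ∧ R a b
  | [], _, _, hb => by simp at hb
  | (a :: rest), hch, hhd, hb => by
    have hal : a ∈ l := hhd a rfl
    obtain ⟨b, hbw, hbl⟩ := hb
    have hba : b ≠ a := fun hc => hbl (hc ▸ hal)
    have hbrest : b ∈ rest := by
      rcases List.mem_cons.1 hbw with rfl | h
      · exact absurd hal hbl
      · exact h
    match rest, hbrest with
    | (c :: rest'), hbrest =>
      by_cases hcl : c ∈ l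
      · exact exists_adj_boundary_list l (c :: rest') (List.isChain_cons_cons.1 hch).2
          (fun a' ha' => by simpa using (by simpa using ha' : c = a') ▸ hcl)
          ⟨b, hbrest, hbl⟩
      · exact ⟨a, c, hal, hcl, (List.isChain_cons_cons.1 hch).1⟩

/-! ### Paths as functions, connectors -/

def OnP (x : ℕ → V) (k : ℕ) (v : V) : Prop := ∃ t, t ≤ k ∧ x t = v

def IsConnW (G : SimpleGraph V) (x : ℕ → V) (k a b : ℕ) : Prop :=
  a < b ∧ b ≤ k ∧ ∃ r : List V, (∀ v ∈ r, ¬ OnP x k v) ∧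
    List.IsChain G.Adj (x a :: (r ++ [x b]))

def IsConn (G : SimpleGraph V) (x : ℕ → V) (k a b : ℕ) : Prop :=
  a < b ∧ b ≤ k ∧ ∃ r : List V, r.Nodup ∧ (∀ v ∈ r, ¬ OnP x k v) ∧
    List.IsChain G.Adj (x a :: (r ++ [x b]))

lemma IsConn.isConnW {G : SimpleGraph V} {x : ℕ → V} {k a b : ℕ}
    (h : IsConn G x k a b) : IsConnW G x k a b :=
  ⟨h.1, h.2.1, h.2.2.choose, h.2.2.choose_spec.2.1, h.2.2.choose_spec.2.2⟩

lemma IsConnW.isConn {G : SimpleGraph V} {x : ℕ → V} {k a b : ℕ}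
    (hinj : ∀ r q, r ≤ k → q ≤ k → x r = x q → r = q)
    (h : IsConnW G x k a b) : IsConn G x k a b := by
  obtain ⟨hab, hbk, r, hoff, hch⟩ := h
  refine ⟨hab, hbk, ?_⟩
  obtain ⟨l', hnd, hch', hhd, hlast, hsub⟩ := exists_nodup_chain' _ hch
  have hne : x a ≠ x b := fun hc =>
    absurd (hinj a b (by omega) hbk hc) (by omega)
  have hcat : (x a :: (r ++ [x b])).getLast? = some (x b) := by
    rw [List.getLast?_eq_head?_reverse]; simp
  rw [hcat] at hlast
  match l', hhd with
  | (c :: rest), hhd =>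
    have hc : c = x a := by simpa using hhd
    subst hc
    have hrestne : rest ≠ [] := by
      rintro rfl
      exact hne (by simpa using hlast)
    have hlast2 : rest.getLast hrestne = x b := by
      have h1 : (x a :: rest).getLast? = some (rest.getLast hrestne) := by
        rw [List.getLast?_eq_getLast (l := x a :: rest) (by simp), List.getLast_cons hrestne]
      rw [h1] at hlast
      simpa using hlast
    have hdecomp : rest = rest.dropLast ++ [x b] := by
      conv_lhs => rw [← List.dropLast_append_getLast hrestne]
      rw [hlast2]
    refine ⟨rest.dropLast, ?_, ?_, ?_⟩
    · have := hnd.of_cons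
      rw [hdecomp] at this
      exact (List.nodup_append'.1 this).1
    · intro v hv
      have hvrest : v ∈ rest := by rw [hdecomp]; exact List.mem_append_left _ hv
      have hvsub := hsub v (List.mem_cons_of_mem _ hvrest)
      rcases List.mem_cons.1 hvsub with rfl | hvsub2
      · exact False.elim (absurd hvrest (List.nodup_cons.1 hnd).1)
      rcases List.mem_append.1 hvsub2 with hv2 | hv3
      · exact hoff _ hv2
      · rw [List.mem_singleton] at hv3
        subst hv3
        exfalso
        rw [hdecomp] at hnd
        have := hnd.of_cons
        rw [List.nodup_append'] at this
        exact this.2.2 hv (List.mem_singleton_self _)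
    · rw [← hdecomp]; exact hch'

lemma conn_rec {G : SimpleGraph V} {x : ℕ → V} {k : ℕ}
    (hinj : ∀ r q, r ≤ k → q ≤ k → x r = x q → r = q) (m : ℕ) (hm : m < k) :
    ∀ (w acc : List V) (a : ℕ), a < m →
      (∀ v ∈ acc, ¬ OnP x k v) →
      List.IsChain G.Adj (x a :: (acc ++ w)) →
      w.getLast? = some (x k) →
      x m ∉ w →
      ∃ a' b', a' < m ∧ m < b' ∧ IsConnW G x k a' b'
  | [], acc, a, ham, hacc, hch, hlast, hnm => by simp at hlast
  | (v :: w'), acc, a, ham, hacc, hch, hlast, hnm => by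
    by_cases hv : OnP x k v
    · obtain ⟨b, hbk, rfl⟩ := hv
      rcases lt_trichotomy b m with hbm | rfl | hmb
      · -- reset at x b and continue
        have hw' : w' ≠ [] := by
          rintro rfl
          simp only [List.getLast?_singleton, Option.some.injEq] at hlast
          exact absurd (hinj b k hbk le_rfl hlast) (by omega)
        match w', hw' with
        | (d :: w''), _ =>
          refine conn_rec hinj m hm (d :: w'') [] b hbm (by simp) ?_ ?_ ?_
          · have hsuf : (x b :: (d :: w'')) <:+ (x a :: (acc ++ (x b :: d :: w''))) :=
              ⟨x a :: acc, by simp⟩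
            exact hch.suffix hsuf
          · rw [List.getLast?_cons_cons] at hlast; exact hlast
          · exact fun hc => hnm (List.mem_cons_of_mem _ hc)
      · exact absurd (List.mem_cons_self) hnm
      · refine ⟨a, b, ham, hmb, ham.trans hmb, hbk, acc, hacc, ?_⟩
        have hpre : (x a :: (acc ++ [x b])) <+: (x a :: (acc ++ (x b :: w'))) := by
          refine ⟨w', by simp⟩
        exact hch.prefix hpre
    · have hw' : w' ≠ [] := by
        rintro rfl
        simp only [List.getLast?_singleton, Option.some.injEq] at hlast
        exact hv ⟨k, le_rfl, hlast.symm⟩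
      match w', hw' with
      | (d :: w''), _ =>
        refine conn_rec hinj m hm (d :: w'') (acc ++ [v]) a ham ?_ ?_ ?_ ?_
        · intro u hu
          rcases List.mem_append.1 hu with hu | hu
          · exact hacc u hu
          · rw [List.mem_singleton] at hu; subst hu; exact hv
        · have : acc ++ (v :: d :: w'') = (acc ++ [v]) ++ (d :: w'') := by simp
          rw [this] at hch; exact hch
        · rw [List.getLast?_cons_cons] at hlast; exact hlast
        · exact fun hc => hnm (List.mem_cons_of_mem _ hc)

lemma conn_exists {G : SimpleGraph V} {x : ℕ → V} {k : ℕ}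
    (hinj : ∀ r q, r ≤ k → q ≤ k → x r = x q → r = q)
    (hnocut : ∀ v : V, (G.induce ({v}ᶜ : Set V)).Connected)
    (m : ℕ) (h0 : 0 < m) (hm : m < k) :
    ∃ a b, a < m ∧ m < b ∧ IsConn G x k a b := by
  have h0m : x 0 ∈ ({x m}ᶜ : Set V) := by
    simp only [Set.mem_compl_iff, Set.mem_singleton_iff]
    intro hc; exact absurd (hinj 0 m (by omega) (by omega) hc) (by omega)
  have hkm : x k ∈ ({x m}ᶜ : Set V) := by
    simp only [Set.mem_compl_iff, Set.mem_singleton_iff]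
    intro hc; exact absurd (hinj k m le_rfl (by omega) hc) (by omega)
  obtain ⟨p⟩ := (hnocut (x m)).preconnected ⟨x 0, h0m⟩ ⟨x k, hkm⟩
  set w : List V := p.support.map Subtype.val with hw
  have hchw : List.IsChain G.Adj w := by
    apply (List.isChain_map _).2
    exact (p.isChain_adj_support).imp fun c d hcd => hcd
  have hhdw : w.head? = some (x 0) := by
    rw [hw, p.support_eq_cons]; rfl
  have hlastw : w.getLast? = some (x k) := by
    rw [hw, List.getLast?_eq_head?_reverse, ← List.map_reverse, ← p.support_reverse,
      (p.reverse).support_eq_cons]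
    rfl
  have hnmw : x m ∉ w := by
    rw [hw]
    rintro hmem
    obtain ⟨⟨u, hu⟩, _, huv⟩ := List.mem_map.1 hmem
    exact hu (by simpa using huv)
  match hww : w, hhdw with
  | (c :: wt), hhdw =>
    have hc : c = x 0 := by simpa using hhdw
    subst hc
    have hwtne : wt ≠ [] := by
      rintro rfl
      simp only [List.getLast?_singleton, Option.some.injEq] at hlastw
      exact absurd (hinj 0 k (by omega) le_rfl hlastw) (by omega)
    obtain ⟨a', b', ha', hb', hconn⟩ :=
      conn_rec hinj m hm wt [] 0 h0 (by simp) (by simpa using hchw)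
        (by
          match wt, hwtne with
          | (d :: wt'), _ => rw [List.getLast?_cons_cons] at hlastw; exact hlastw)
        (fun hc => hnmw (List.mem_cons_of_mem _ hc))
    exact ⟨a', b', ha', hb', hconn.isConn hinj⟩

/-! ### The two-strand state for Case 3 -/

lemma conn_prefix {G : SimpleGraph V} {x : ℕ → V} {a' b' : ℕ} {r' : List V} {z : V}
    (hch' : List.IsChain G.Adj (x a' :: (r' ++ [x b']))) (hz : z ∈ r') :
    ∃ rz, (∀ v ∈ rz, v ∈ r') ∧ List.IsChain G.Adj (x a' :: (rz ++ [z])) := by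
  obtain ⟨u, vv, rfl⟩ := List.append_of_mem hz
  refine ⟨u, fun v hv => List.mem_append_left _ hv, ?_⟩
  have hpre : (x a' :: (u ++ [z])) <+: (x a' :: ((u ++ z :: vv) ++ [x b'])) :=
    ⟨vv ++ [x b'], by simp⟩
  exact hch'.prefix hpre

lemma merge_conn {G : SimpleGraph V} {x : ℕ → V} {k az a' b' : ℕ} {rz r' : List V} {z : V}
    (hzoff : ¬ OnP x k z)
    (hrz : ∀ v ∈ rz, ¬ OnP x k v) (hchz : List.IsChain G.Adj (x az :: (rz ++ [z])))
    (hr'off : ∀ v ∈ r', ¬ OnP x k v) (hch' : List.IsChain G.Adj (x a' :: (r' ++ [x b'])))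
    (hz : z ∈ r') (hab : az < b') (hbk : b' ≤ k) : IsConnW G x k az b' := by
  obtain ⟨u, vv, rfl⟩ := List.append_of_mem hz
  refine ⟨hab, hbk, rz ++ (z :: vv), ?_, ?_⟩
  · intro v hv
    rcases List.mem_append.1 hv with hv | hv
    · exact hrz v hv
    · rcases List.mem_cons.1 hv with rfl | hv
      · exact hzoff
      · exact hr'off v (by simp [hv])
  · have hsuf : List.IsChain G.Adj (z :: (vv ++ [x b'])) :=
      hch'.suffix ⟨x a' :: u, by simp⟩
    have hglue := List.isChain_append.2
      ⟨hchz, (List.isChain_cons.1 hsuf).2, ?_⟩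
    · have heq : (x az :: (rz ++ [z])) ++ (vv ++ [x b'])
          = x az :: ((rz ++ (z :: vv)) ++ [x b']) := by simp
      rw [heq] at hglue
      exact hglue
    · intro p hp q hq
      have hp' : p = z := by
        rw [show (x az :: (rz ++ [z])) = (x az :: rz) ++ [z] by simp,
          List.getLast?_concat] at hp
        exact (by simpa using hp : z = p).symm
      subst hp'
      exact (List.isChain_cons.1 hsuf).1 q hq

structure St (G : SimpleGraph V) (x : ℕ → V) (k i : ℕ) (S' : Finset ℕ)
    (c bq : ℕ) (U W : List V) : Prop where
  hcbq : c < bq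
  hibq : i < bq
  hbqk : bq ≤ k
  hc1 : 1 ≤ c
  hmax : ∀ a b, a < max c i → IsConn G x k a b → b ≤ bq
  hUhd : U.head? = some (x 0)
  hWhd : W.head? = some (x 0)
  hUlast : U.getLast? = some (x c)
  hWlast : W.getLast? = some (x bq)
  hUch : List.IsChain G.Adj U
  hWch : List.IsChain G.Adj W
  hUnd : U.Nodup
  hWnd : W.Nodup
  hUW : ∀ v, v ∈ U → v ∈ W → v = x 0
  hUidx : ∀ t, t ≤ k → x t ∈ U → t ≤ c
  hWidx : ∀ t, t ≤ k → x t ∈ W → t < c ∨ t = bq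
  hprov : ∀ z, (z ∈ U ∨ z ∈ W) → ¬ OnP x k z →
    ∃ az rz, az < c ∧ (∀ v ∈ rz, ¬ OnP x k v) ∧
      List.IsChain G.Adj (x az :: (rz ++ [z]))
  hlen : S'.card + 2 ≤ U.length + W.length + (i - c)

lemma St.hU2 {G : SimpleGraph V} {x : ℕ → V} {k i : ℕ} {S' : Finset ℕ}
    {c bq : ℕ} {U W : List V}
    (hinj : ∀ r q, r ≤ k → q ≤ k → x r = x q → r = q)
    (h : St G x k i S' c bq U W) : 2 ≤ U.length ∧ 2 ≤ W.length := by
  have hcbq := h.hcbq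
  have hbqk := h.hbqk
  have hc1 := h.hc1
  constructor
  · match U, h.hUhd, h.hUlast with
    | [u], hhd, hlast =>
      exfalso
      have h1 : u = x 0 := by simpa using hhd
      have h2 : u = x c := by simpa using hlast
      have := hinj 0 c (by omega) (by omega) (h1 ▸ h2)
      omega
    | (u :: u' :: tl), _, _ => simp
  · match W, h.hWhd, h.hWlast with
    | [u], hhd, hlast =>
      exfalso
      have h1 : u = x 0 := by simpa using hhd
      have h2 : u = x bq := by simpa using hlast
      have := hinj 0 bq (by omega) h.hbqk (h1 ▸ h2)
      omega
    | (u :: u' :: tl), _, _ => simp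

section Case3

variable {G : SimpleGraph V} {x : ℕ → V} {k i j : ℕ} {S' T : Finset ℕ}

lemma case3_base
    (hinj : ∀ r q, r ≤ k → q ≤ k → x r = x q → r = q)
    (hadj : ∀ r, r < k → G.Adj (x r) (x (r + 1)))
    (hnocut : ∀ v : V, (G.induce ({v}ᶜ : Set V)).Connected)
    (hS'sub : ∀ s ∈ S', 1 ≤ s ∧ s ≤ i) (hS'i : i ∈ S')
    (hchordS : ∀ s ∈ S', G.Adj (x 0) (x s))
    (h1i : 1 ≤ i) (hik : i < k) :
    ∃ c bq U W, c ≤ i ∧ St G x k i S' c bq U W := by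
  obtain ⟨a0, b0, ha0, hb0, hconn0⟩ := conn_exists hinj hnocut i (by omega) hik
  set bs : Set ℕ := {b | ∃ a, a < i ∧ IsConn G x k a b} with hbs
  have hbsne : bs.Nonempty := ⟨b0, a0, ha0, hconn0⟩
  have hbsbdd : BddAbove bs := ⟨k, fun b hb => hb.choose_spec.2.2.1⟩
  set bq := sSup bs with hbqdef
  have hbqmem : bq ∈ bs := Nat.sSup_mem hbsne hbsbdd
  have hbqub : ∀ b ∈ bs, b ≤ bq := fun b hb => le_csSup hbsbdd hb
  obtain ⟨a1, ha1i, hconn⟩ := hbqmem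
  have hibq : i < bq := lt_of_lt_of_le hb0 (hbqub b0 ⟨a0, ha0, hconn0⟩)
  obtain ⟨ha1b, hbqk, r1, hr1nd, hr1off, hr1ch⟩ := hconn
  set Sf := S'.filter (fun s => a1 < s) with hSfdef
  have hSfne : Sf.Nonempty := ⟨i, Finset.mem_filter.2 ⟨hS'i, ha1i⟩⟩
  set c := Sf.min' hSfne with hcdef
  have hcS' : c ∈ S' := (Finset.mem_filter.1 (Sf.min'_mem hSfne)).1
  have ha1c : a1 < c := (Finset.mem_filter.1 (Sf.min'_mem hSfne)).2
  have hci : c ≤ i := (hS'sub c hcS').2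
  have hc1 : 1 ≤ c := (hS'sub c hcS').1
  have hcmin : ∀ s ∈ S', a1 < s → c ≤ s := fun s hs has =>
    Sf.min'_le s (Finset.mem_filter.2 ⟨hs, has⟩)
  have ha1k : a1 ≤ k := by omega
  have hck : c ≤ k := by omega
  refine ⟨c, bq, [x 0, x c], seg x 0 a1 ++ (r1 ++ [x bq]), hci, ?_⟩
  have hsegW : ∀ v ∈ seg x 0 a1, ∃ rr, rr ≤ a1 ∧ x rr = v := by
    intro v hv
    obtain ⟨rr, _, hrr2, hrr3⟩ := mem_seg.1 hv
    exact ⟨rr, hrr2, hrr3⟩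
  constructor
  · exact lt_of_le_of_lt hci hibq
  · exact hibq
  · exact hbqk
  · exact hc1
  · -- hmax
    intro a b hai hc'
    have : a < i := by rw [max_eq_right hci] at hai; exact hai
    exact hbqub b ⟨a, this, hc'⟩
  · rfl
  · -- W head
    rw [List.head?_append, head?_seg (by omega)]
    rfl
  · -- U last
    rfl
  · -- W last
    rw [List.getLast?_append]
    simp only [List.getLast?_concat]
    rfl
  · -- U chain
    exact List.isChain_pair.2 (hchordS c hcS')
  · -- W chain
    refine List.isChain_append.2 ⟨chain'_seg (fun r h1 h2 => hadj r (by omega)), (List.isChain_cons.1 hr1ch).2, ?_⟩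
    intro p hp q hq
    rw [getLast?_seg (by omega)] at hp
    have hp' : p = x a1 := (by simpa using hp : x a1 = p).symm
    subst hp'
    exact (List.isChain_cons.1 hr1ch).1 q hq
  · -- U nodup
    refine List.nodup_cons.2 ⟨?_, List.nodup_singleton _⟩
    intro hmem
    rw [List.mem_singleton] at hmem
    exact absurd (hinj 0 c (by omega) hck hmem) (by omega)
  · -- W nodup
    rw [List.nodup_append']
    refine ⟨nodup_seg ha1k hinj, ?_, ?_⟩
    · rw [List.nodup_append']
      refine ⟨hr1nd, List.nodup_singleton _, ?_⟩
      intro v hv hv2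
      rw [List.mem_singleton] at hv2
      exact hr1off v hv (hv2 ▸ ⟨bq, hbqk, rfl⟩)
    · intro v hv hv2
      obtain ⟨rr, hrr1, rfl⟩ := hsegW v hv
      rcases List.mem_append.1 hv2 with hv3 | hv3
      · exact hr1off _ hv3 ⟨rr, by omega, rfl⟩
      · rw [List.mem_singleton] at hv3
        exact absurd (hinj rr bq (by omega) hbqk hv3) (by omega)
  · -- UW inter
    intro v hv hv2
    rcases List.mem_cons.1 hv with rfl | hv
    · rfl
    rw [List.mem_singleton] at hv
    subst hv
    exfalso
    rcases List.mem_append.1 hv2 with hv3 | hv3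
    · obtain ⟨rr, hrr1, hrr⟩ := hsegW _ hv3
      have := hinj rr c (by omega) hck hrr
      omega
    · rcases List.mem_append.1 hv3 with hv4 | hv4
      · exact hr1off _ hv4 ⟨c, hck, rfl⟩
      · rw [List.mem_singleton] at hv4
        have := hinj c bq hck hbqk hv4
        omega
  · -- U idx
    intro t htk hmem
    rcases List.mem_cons.1 hmem with h1 | h1
    · have := hinj t 0 htk (by omega) h1; omega
    · rw [List.mem_singleton] at h1
      have := hinj t c htk hck h1; omega
  · -- W idx
    intro t htk hmem
    rcases List.mem_append.1 hmem with h1 | h1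
    · obtain ⟨rr, hrr1, hrr⟩ := hsegW _ h1
      have := hinj rr t (by omega) htk hrr
      omega
    · rcases List.mem_append.1 h1 with h2 | h2
      · exact absurd ⟨t, htk, rfl⟩ (hr1off _ h2)
      · rw [List.mem_singleton] at h2
        have := hinj t bq htk hbqk h2
        omega
  · -- provenance
    intro z hz hoff
    rcases hz with hz | hz
    · exfalso
      rcases List.mem_cons.1 hz with rfl | hz
      · exact hoff ⟨0, by omega, rfl⟩
      · rw [List.mem_singleton] at hz
        exact hoff (hz ▸ ⟨c, hck, rfl⟩)
    · rcases List.mem_append.1 hz with h1 | h1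
      · obtain ⟨rr, hrr1, hrr⟩ := hsegW _ h1
        exact absurd ⟨rr, by omega, hrr⟩ hoff
      rcases List.mem_append.1 h1 with h2 | h2
      · obtain ⟨rz, hrzsub, hrzch⟩ := conn_prefix hr1ch h2
        exact ⟨a1, rz, ha1c, fun v hv => hr1off v (hrzsub v hv), hrzch⟩
      · rw [List.mem_singleton] at h2
        exact absurd (h2 ▸ ⟨bq, hbqk, rfl⟩) hoff
  · -- length
    have hsubS : S' ⊆ Finset.Icc 1 a1 ∪ Finset.Icc c i := by
      intro s hs
      rcases le_or_gt s a1 with h1 | h1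
      · exact Finset.mem_union_left _ (Finset.mem_Icc.2 ⟨(hS'sub s hs).1, h1⟩)
      · exact Finset.mem_union_right _ (Finset.mem_Icc.2 ⟨hcmin s hs h1, (hS'sub s hs).2⟩)
    have hcard : S'.card ≤ a1 + (i + 1 - c) := by
      calc S'.card ≤ (Finset.Icc 1 a1 ∪ Finset.Icc c i).card := Finset.card_le_card hsubS
        _ ≤ (Finset.Icc 1 a1).card + (Finset.Icc c i).card := Finset.card_union_le _ _
        _ = a1 + (i + 1 - c) := by rw [Nat.card_Icc, Nat.card_Icc]; omega
    have hlseg : (seg x 0 a1).length = a1 + 1 := by rw [length_seg]; omega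
    simp only [List.length_append, List.length_cons, List.length_singleton, hlseg]
    omega

lemma case3_step
    (hinj : ∀ r q, r ≤ k → q ≤ k → x r = x q → r = q)
    (hadj : ∀ r, r < k → G.Adj (x r) (x (r + 1)))
    (hnocut : ∀ v : V, (G.induce ({v}ᶜ : Set V)).Connected)
    {c bq : ℕ} {U W : List V}
    (hst : St G x k i S' c bq U W) (hbqlt : bq < k) :
    ∃ bq' W', bq < bq' ∧ St G x k i S' bq bq' W W' := by
  have hc1 := hst.hc1
  have hcbq := hst.hcbq
  have hibq := hst.hibq
  have hbqk := hst.hbqk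
  obtain ⟨a0, b0, ha0, hb0, hconn0⟩ := conn_exists hinj hnocut bq (by omega) hbqlt
  set bs : Set ℕ := {b | ∃ a, a < bq ∧ IsConn G x k a b} with hbs
  have hbsne : bs.Nonempty := ⟨b0, a0, ha0, hconn0⟩
  have hbsbdd : BddAbove bs := ⟨k, fun b hb => hb.choose_spec.2.2.1⟩
  set bq' := sSup bs with hbq'def
  have hmem : bq' ∈ bs := Nat.sSup_mem hbsne hbsbdd
  have hub : ∀ b ∈ bs, b ≤ bq' := fun b hb => le_csSup hbsbdd hb
  have hbqbq' : bq < bq' := lt_of_lt_of_le hb0 (hub b0 ⟨a0, ha0, hconn0⟩)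
  obtain ⟨a', ha'bq, hconn⟩ := hmem
  obtain ⟨ha'b, hbq'k, r', hr'nd, hr'off, hr'ch⟩ := hconn
  have ha'max : max c i ≤ a' := by
    by_contra h
    push_neg at h
    have := hst.hmax a' bq' h ⟨ha'b, hbq'k, r', hr'nd, hr'off, hr'ch⟩
    omega
  have ha'c : c ≤ a' := le_trans (le_max_left _ _) ha'max
  have ha'i : i ≤ a' := le_trans (le_max_right _ _) ha'max
  have hck : c ≤ k := by omega
  have ha'k : a' ≤ k := by omega
  set M := seg x (c+1) a' with hMdef
  have hMmem : ∀ v ∈ M, ∃ rr, c+1 ≤ rr ∧ rr ≤ a' ∧ x rr = v := fun v hv => mem_seg.1 hv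
  have hmerge : ∀ z ∈ r', (z ∈ U ∨ z ∈ W) → False := by
    intro z hzr hzUW
    have hzoff : ¬ OnP x k z := hr'off z hzr
    obtain ⟨az, rz, hazc, hrz, hchz⟩ := hst.hprov z hzUW hzoff
    have hcw := merge_conn hzoff hrz hchz hr'off hr'ch hzr (by omega) hbq'k
    have := hst.hmax az bq' (lt_of_lt_of_le hazc (le_max_left _ _)) (hcw.isConn hinj)
    omega
  refine ⟨bq', U ++ (M ++ (r' ++ [x bq'])), hbqbq', ?_⟩
  have hjunc : ∀ y ∈ (M ++ (r' ++ [x bq'])).head?, G.Adj (x c) y := by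
    rcases eq_or_lt_of_le ha'c with heq | hlt
    · intro y hy
      rw [hMdef, ← heq, seg_eq_nil (by omega), List.nil_append] at hy
      have h2 := (List.isChain_cons.1 hr'ch).1 y hy
      rw [← heq] at h2
      exact h2
    · intro y hy
      rw [List.head?_append, hMdef, head?_seg (by omega)] at hy
      have hy2 : y = x (c+1) := (by simpa using hy : x (c+1) = y).symm
      subst hy2
      exact hadj c (by omega)
  constructor
  · exact hbqbq'
  · omega
  · exact hbq'k
  · omega
  · -- hmax
    intro a b ha hc'
    rw [max_eq_left (le_of_lt hibq)] at ha
    exact hub b ⟨a, ha, hc'⟩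
  · exact hst.hWhd
  · rw [List.head?_append, hst.hUhd]; rfl
  · exact hst.hWlast
  · rw [List.getLast?_append, List.getLast?_append]
    simp [List.getLast?_concat]
  · exact hst.hWch
  · -- chain of W'
    refine List.isChain_append.2 ⟨hst.hUch, ?_, ?_⟩
    · refine List.isChain_append.2 ⟨chain'_seg (fun r hr1 hr2 => hadj r (by omega)),
        (List.isChain_cons.1 hr'ch).2, ?_⟩
      intro p hp q hq
      rcases eq_or_lt_of_le ha'c with heq | hlt
      · rw [hMdef, ← heq, seg_eq_nil (by omega)] at hp
        simp at hp
      · rw [hMdef, getLast?_seg (by omega)] at hp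
        have hp' : p = x a' := (by simpa using hp : x a' = p).symm
        subst hp'
        exact (List.isChain_cons.1 hr'ch).1 q hq
    · intro p hp q hq
      rw [hst.hUlast] at hp
      have hp' : p = x c := (by simpa using hp : x c = p).symm
      subst hp'
      exact hjunc q hq
  · exact hst.hWnd
  · -- nodup of W'
    rw [List.nodup_append']
    refine ⟨hst.hUnd, ?_, ?_⟩
    · rw [List.nodup_append']
      refine ⟨nodup_seg ha'k hinj, ?_, ?_⟩
      · rw [List.nodup_append']
        refine ⟨hr'nd, List.nodup_singleton _, ?_⟩
        intro v hv hv2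
        rw [List.mem_singleton] at hv2
        exact hr'off v hv (hv2 ▸ ⟨bq', hbq'k, rfl⟩)
      · intro v hv hv2
        obtain ⟨rr, hrr1, hrr2, rfl⟩ := hMmem v hv
        rcases List.mem_append.1 hv2 with hv3 | hv3
        · exact hr'off _ hv3 ⟨rr, by omega, rfl⟩
        · rw [List.mem_singleton] at hv3
          exact absurd (hinj rr bq' (by omega) hbq'k hv3) (by omega)
    · intro v hv hv2
      rcases List.mem_append.1 hv2 with hv3 | hv3
      · obtain ⟨rr, hrr1, hrr2, rfl⟩ := hMmem v hv3
        have := hst.hUidx rr (by omega) hv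
        omega
      rcases List.mem_append.1 hv3 with hv4 | hv4
      · exact hmerge v hv4 (Or.inl hv)
      · rw [List.mem_singleton] at hv4
        subst hv4
        have := hst.hUidx bq' hbq'k hv
        omega
  · -- inter
    intro v hv hv2
    rcases List.mem_append.1 hv2 with hv3 | hv3
    · exact hst.hUW v hv3 hv
    rcases List.mem_append.1 hv3 with hv4 | hv4
    · obtain ⟨rr, hrr1, hrr2, rfl⟩ := hMmem v hv4
      have := hst.hWidx rr (by omega) hv
      omega
    rcases List.mem_append.1 hv4 with hv5 | hv5
    · exact (hmerge v hv5 (Or.inr hv)).elim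
    · rw [List.mem_singleton] at hv5
      subst hv5
      have := hst.hWidx bq' hbq'k hv
      omega
  · -- U' idx
    intro t htk hmem2
    rcases hst.hWidx t htk hmem2 with h1 | h1 <;> omega
  · -- W' idx
    intro t htk hmem2
    rcases List.mem_append.1 hmem2 with h1 | h1
    · have := hst.hUidx t htk h1; omega
    rcases List.mem_append.1 h1 with h2 | h2
    · obtain ⟨rr, hrr1, hrr2, hrr3⟩ := hMmem _ h2
      have := hinj rr t (by omega) htk hrr3
      omega
    rcases List.mem_append.1 h2 with h3 | h3
    · exact absurd ⟨t, htk, rfl⟩ (hr'off _ h3)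
    · rw [List.mem_singleton] at h3
      have := hinj t bq' htk hbq'k h3
      omega
  · -- provenance
    intro z hz hoff
    rcases hz with hz | hz
    · obtain ⟨az, rz, hazc, hrz, hchz⟩ := hst.hprov z (Or.inr hz) hoff
      exact ⟨az, rz, by omega, hrz, hchz⟩
    rcases List.mem_append.1 hz with h1 | h1
    · obtain ⟨az, rz, hazc, hrz, hchz⟩ := hst.hprov z (Or.inl h1) hoff
      exact ⟨az, rz, by omega, hrz, hchz⟩
    rcases List.mem_append.1 h1 with h2 | h2
    · obtain ⟨rr, hrr1, hrr2, hrr3⟩ := hMmem _ h2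
      exact absurd ⟨rr, by omega, hrr3⟩ hoff
    rcases List.mem_append.1 h2 with h3 | h3
    · obtain ⟨rz, hrzsub, hrzch⟩ := conn_prefix hr'ch h3
      exact ⟨a', rz, by omega, fun v hv => hr'off v (hrzsub v hv), hrzch⟩
    · rw [List.mem_singleton] at h3
      exact absurd (h3 ▸ ⟨bq', hbq'k, rfl⟩) hoff
  · -- length
    have hlenM : M.length = a' - c := by rw [hMdef, length_seg]; omega
    have hold := hst.hlen
    simp only [List.length_append, List.length_singleton, hlenM]
    omega

lemma case3_final
    (hinj : ∀ r q, r ≤ k → q ≤ k → x r = x q → r = q)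
    (hadj : ∀ r, r < k → G.Adj (x r) (x (r + 1)))
    (hTsub : ∀ t ∈ T, j ≤ t ∧ t < k) (hTj : j ∈ T)
    (hchordT : ∀ t ∈ T, G.Adj (x k) (x t))
    (hij : i ≤ j)
    {c bq : ℕ} {U W : List V}
    (hst : St G x k i S' c bq U W) (hcj : c ≤ j) (hjbq : j < bq) :
    ∃ l, IsCycleList G l ∧ S'.card + T.card ≤ l.length := by
  have hc1 := hst.hc1
  have hcbq := hst.hcbq
  have hibq := hst.hibq
  have hbqk := hst.hbqk
  have hjk : j < k := (hTsub j hTj).2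
  have hU2 := (hst.hU2 hinj).1
  have hW2 := (hst.hU2 hinj).2
  set Tf := T.filter (fun t => t < bq) with hTfdef
  have hTfne : Tf.Nonempty := ⟨j, Finset.mem_filter.2 ⟨hTj, hjbq⟩⟩
  set ts := Tf.max' hTfne with htsdef
  have htsT : ts ∈ T := (Finset.mem_filter.1 (Tf.max'_mem hTfne)).1
  have htsbq : ts < bq := (Finset.mem_filter.1 (Tf.max'_mem hTfne)).2
  have hjts : j ≤ ts := Tf.le_max' j (Finset.mem_filter.2 ⟨hTj, hjbq⟩)
  have htsmax : ∀ t ∈ T, t < bq → t ≤ ts := fun t ht h2 =>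
    Tf.le_max' t (Finset.mem_filter.2 ⟨ht, h2⟩)
  have hcts : c ≤ ts := le_trans hcj hjts
  have htsk : ts < k := (hTsub ts htsT).2
  have hck : c ≤ k := by omega
  obtain ⟨w0, Wt, rfl⟩ : ∃ w0 Wt, W = w0 :: Wt := by
    cases W with
    | nil => exact absurd hst.hWhd (by simp)
    | cons w0 Wt => exact ⟨w0, Wt, rfl⟩
  have hw0 : w0 = x 0 := by
    have := hst.hWhd; simpa using this
  subst hw0
  have hWtne : Wt ≠ [] := by
    rintro rfl
    have := hst.hWlast
    simp only [List.getLast?_singleton, Option.some.injEq] at this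
    exact absurd (hinj 0 bq (by omega) hbqk this) (by omega)
  have hWtlast : Wt.getLast? = some (x bq) := by
    have h2 := hst.hWlast
    match Wt, hWtne with
    | (d :: Wt'), _ => rw [List.getLast?_cons_cons] at h2; exact h2
  have hWtmem : ∀ v ∈ Wt, v ∈ (x 0 :: Wt) := fun v hv => List.mem_cons_of_mem _ hv
  set X1 := seg x (c+1) ts with hX1def
  set X2 := (seg x (bq+1) k).reverse with hX2def
  have hX1mem : ∀ v ∈ X1, ∃ rr, c+1 ≤ rr ∧ rr ≤ ts ∧ x rr = v := fun v hv => mem_seg.1 hv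
  have hX2mem : ∀ v ∈ X2, ∃ rr, bq+1 ≤ rr ∧ rr ≤ k ∧ x rr = v := by
    intro v hv
    rw [hX2def, List.mem_reverse] at hv
    exact mem_seg.1 hv
  refine ⟨U ++ (X1 ++ (X2 ++ Wt.reverse)), ⟨?_, ?_, ?_⟩, ?_⟩
  · have h1 : 1 ≤ Wt.length := by
      cases Wt with
      | nil => exact absurd rfl hWtne
      | cons _ _ => simp
    simp only [List.length_append, List.length_reverse]
    omega
  · rw [List.nodup_append']
    refine ⟨hst.hUnd, ?_, ?_⟩
    · rw [List.nodup_append']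
      refine ⟨nodup_seg (by omega) hinj, ?_, ?_⟩
      · rw [List.nodup_append']
        refine ⟨by rw [hX2def, List.nodup_reverse]; exact nodup_seg le_rfl hinj,
          by rw [List.nodup_reverse]; exact (List.nodup_cons.1 hst.hWnd).2, ?_⟩
        · intro v hv hv2
          rw [List.mem_reverse] at hv2
          obtain ⟨rr, hrr1, hrr2, rfl⟩ := hX2mem v hv
          rcases hst.hWidx rr (by omega) (hWtmem _ hv2) with h | h <;> omega
      · intro v hv hv2
        obtain ⟨rr, hrr1, hrr2, rfl⟩ := hX1mem v hv
        rcases List.mem_append.1 hv2 with hv3 | hv3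
        · obtain ⟨rr', hrr1', hrr2', hrr3'⟩ := hX2mem _ hv3
          have := hinj rr' rr (by omega) (by omega) hrr3'
          omega
        · rw [List.mem_reverse] at hv3
          rcases hst.hWidx rr (by omega) (hWtmem _ hv3) with h | h <;> omega
    · intro v hv hv2
      rcases List.mem_append.1 hv2 with hv3 | hv3
      · obtain ⟨rr, hrr1, hrr2, rfl⟩ := hX1mem v hv3
        have := hst.hUidx rr (by omega) hv
        omega
      rcases List.mem_append.1 hv3 with hv4 | hv4
      · obtain ⟨rr, hrr1, hrr2, rfl⟩ := hX2mem v hv4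
        have := hst.hUidx rr (by omega) hv
        omega
      · rw [List.mem_reverse] at hv4
        have := hst.hUW v hv (hWtmem _ hv4)
        subst this
        exact (List.nodup_cons.1 hst.hWnd).1 hv4
  · have hhd : (U ++ (X1 ++ (X2 ++ Wt.reverse))).head? = some (x 0) := by
      rw [List.head?_append, hst.hUhd]; rfl
    rw [hhd]
    have heq : (U ++ (X1 ++ (X2 ++ Wt.reverse))) ++ (some (x 0)).toList
        = (U ++ X1) ++ (X2 ++ (x 0 :: Wt).reverse) := by
      simp [List.reverse_cons]
    rw [heq]
    have hWrevhd : ((x 0 :: Wt).reverse).head? = some (x bq) := by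
      rw [← List.getLast?_eq_head?_reverse]
      exact hst.hWlast
    have hWrevch : List.IsChain G.Adj ((x 0 :: Wt).reverse) := chain'_reverse_adj hst.hWch
    have hBhd : (X2 ++ (x 0 :: Wt).reverse).head? = some (x k) := by
      rcases eq_or_lt_of_le hbqk with heq2 | hlt2
      · rw [hX2def, heq2, seg_eq_nil (by omega)]
        simp only [List.reverse_nil, List.nil_append]
        rw [hWrevhd, heq2]
      · rw [List.head?_append, hX2def, ← List.getLast?_eq_head?_reverse,
          getLast?_seg (by omega)]
        rfl
    have hBch : List.IsChain G.Adj (X2 ++ (x 0 :: Wt).reverse) := by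
      refine List.isChain_append.2 ⟨?_, hWrevch, ?_⟩
      · exact chain'_reverse_adj (chain'_seg (fun r h1 h2 => hadj r (by omega)))
      · intro p hp q hq
        rw [hX2def, List.getLast?_reverse] at hp
        rcases eq_or_lt_of_le hbqk with heq2 | hlt2
        · rw [heq2, seg_eq_nil (by omega)] at hp
          simp at hp
        · rw [head?_seg (by omega)] at hp
          have hp' : p = x (bq+1) := (by simpa using hp : x (bq+1) = p).symm
          subst hp'
          rw [hWrevhd] at hq
          have hq' : q = x bq := (by simpa using hq : x bq = q).symm
          subst hq'
          exact (hadj bq hlt2).symm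
    have hAch : List.IsChain G.Adj (U ++ X1) := by
      refine List.isChain_append.2 ⟨hst.hUch, chain'_seg (fun r h1 h2 => hadj r (by omega)), ?_⟩
      intro p hp q hq
      rw [hst.hUlast] at hp
      have hp' : p = x c := (by simpa using hp : x c = p).symm
      subst hp'
      rcases eq_or_lt_of_le hcts with heq2 | hlt2
      · rw [hX1def, ← heq2, seg_eq_nil (by omega)] at hq
        simp at hq
      · rw [hX1def, head?_seg (by omega)] at hq
        have hq' : q = x (c+1) := (by simpa using hq : x (c+1) = q).symm
        subst hq'
        exact hadj c (by omega)
    have hAlast : (U ++ X1).getLast? = some (x ts) := by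
      rcases eq_or_lt_of_le hcts with heq2 | hlt2
      · rw [hX1def, ← heq2, seg_eq_nil (by omega)]
        simp only [List.append_nil]
        rw [hst.hUlast, heq2]
      · rw [List.getLast?_append, hX1def, getLast?_seg (by omega)]
        rfl
    refine List.isChain_append.2 ⟨hAch, hBch, ?_⟩
    intro p hp q hq
    rw [hAlast] at hp
    have hp' : p = x ts := (by simpa using hp : x ts = p).symm
    subst hp'
    rw [hBhd] at hq
    have hq' : q = x k := (by simpa using hq : x k = q).symm
    subst hq'
    exact (hchordT ts htsT).symm
  · have hsubT : T ⊆ Finset.Icc j ts ∪ Finset.Icc bq (k-1) := by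
      intro t ht
      rcases lt_or_ge t bq with h1 | h1
      · exact Finset.mem_union_left _ (Finset.mem_Icc.2 ⟨(hTsub t ht).1, htsmax t ht h1⟩)
      · exact Finset.mem_union_right _ (Finset.mem_Icc.2 ⟨h1, by have := (hTsub t ht).2; omega⟩)
    have hTcard : T.card ≤ (ts + 1 - j) + (k - bq) := by
      calc T.card ≤ (Finset.Icc j ts ∪ Finset.Icc bq (k-1)).card := Finset.card_le_card hsubT
        _ ≤ (Finset.Icc j ts).card + (Finset.Icc bq (k-1)).card := Finset.card_union_le _ _
        _ = (ts + 1 - j) + (k - bq) := by rw [Nat.card_Icc, Nat.card_Icc]; omega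
    have hold := hst.hlen
    simp only [List.length_cons] at hold
    simp only [List.length_append, List.length_reverse, hX1def, hX2def, length_seg]
    omega

lemma case3_loop
    (hinj : ∀ r q, r ≤ k → q ≤ k → x r = x q → r = q)
    (hadj : ∀ r, r < k → G.Adj (x r) (x (r + 1)))
    (hnocut : ∀ v : V, (G.induce ({v}ᶜ : Set V)).Connected)
    (hTsub : ∀ t ∈ T, j ≤ t ∧ t < k) (hTj : j ∈ T)
    (hchordT : ∀ t ∈ T, G.Adj (x k) (x t))
    (hij : i ≤ j) :
    ∀ (fuel c bq : ℕ) (U W : List V), k + 1 - bq ≤ fuel → c ≤ j →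
      St G x k i S' c bq U W → ∃ l, IsCycleList G l ∧ S'.card + T.card ≤ l.length := by
  intro fuel
  induction fuel with
  | zero =>
    intro c bq U W hf hcj hst
    exfalso
    have := hst.hbqk
    omega
  | succ n ih =>
    intro c bq U W hf hcj hst
    by_cases hbqj : j < bq
    · exact case3_final hinj hadj hTsub hTj hchordT hij hst hcj hbqj
    · push_neg at hbqj
      have hjk : j < k := (hTsub j hTj).2
      have hbqk : bq < k := lt_of_le_of_lt hbqj hjk
      obtain ⟨bq', W', hlt, hst'⟩ := case3_step hinj hadj hnocut hst hbqk
      exact ih bq bq' W W' (by have := hst'.hbqk; omega) hbqj hst'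

lemma case3
    (hinj : ∀ r q, r ≤ k → q ≤ k → x r = x q → r = q)
    (hadj : ∀ r, r < k → G.Adj (x r) (x (r + 1)))
    (hnocut : ∀ v : V, (G.induce ({v}ᶜ : Set V)).Connected)
    (hS'sub : ∀ s ∈ S', 1 ≤ s ∧ s ≤ i) (hS'i : i ∈ S')
    (hchordS : ∀ s ∈ S', G.Adj (x 0) (x s))
    (hTsub : ∀ t ∈ T, j ≤ t ∧ t < k) (hTj : j ∈ T)
    (hchordT : ∀ t ∈ T, G.Adj (x k) (x t))
    (h1i : 1 ≤ i) (hij : i ≤ j) :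
    ∃ l, IsCycleList G l ∧ S'.card + T.card ≤ l.length := by
  have hjk : j < k := (hTsub j hTj).2
  have hik : i < k := lt_of_le_of_lt hij hjk
  obtain ⟨c, bq, U, W, hci, hst⟩ :=
    case3_base hinj hadj hnocut hS'sub hS'i hchordS h1i hik
  exact case3_loop hinj hadj hnocut hTsub hTj hchordT hij (k+1) c bq U W
    (by omega) (le_trans hci hij) hst

end Case3

/-! ### Longest paths and the pair cycle -/

def IsPathList (G : SimpleGraph V) (l : List V) : Prop :=
  l ≠ [] ∧ l.Nodup ∧ List.IsChain G.Adj l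

lemma exists_longest_path [Fintype V] (G : SimpleGraph V) (v0 : V) :
    ∃ (l : List V), IsPathList G l ∧ ∀ l', IsPathList G l' → l'.length ≤ l.length := by
  set s : Set ℕ := {m | ∃ l, IsPathList G l ∧ l.length = m} with hs
  have hne : s.Nonempty := ⟨1, [v0], ⟨by simp, by simp, by simp⟩, rfl⟩
  have hbdd : BddAbove s := ⟨Fintype.card V, fun m hm => by
    obtain ⟨l, hl, hm⟩ := hm
    exact hm ▸ hl.2.1.length_le_card⟩
  obtain ⟨l, hl, hm⟩ := Nat.sSup_mem hne hbdd
  exact ⟨l, hl, fun l' hl' => hm ▸ le_csSup hbdd ⟨l', hl', rfl⟩⟩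

lemma getD_eq_get {l : List V} {r : ℕ} (h : r < l.length) (d : V) :
    l.getD r d = l.get ⟨r, h⟩ := by
  simp [List.getD_eq_getElem?_getD, List.getElem?_eq_getElem h]

section BuildCycle

variable {G : SimpleGraph V} {x : ℕ → V} {k : ℕ}

lemma buildPairCycle
    (hinj : ∀ r q, r ≤ k → q ≤ k → x r = x q → r = q)
    (hadj : ∀ r, r < k → G.Adj (x r) (x (r + 1)))
    (b a : ℕ) (hba : b < a) (hak : a ≤ k)
    (hadjbk : G.Adj (x k) (x b)) (hadja0 : G.Adj (x 0) (x a))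
    (h3 : 3 ≤ b + 1 + (k + 1 - a)) :
    ∃ lc, IsCycleList G lc ∧ lc.length = b + 1 + (k + 1 - a) ∧
      (∀ v, v ∈ lc ↔ ∃ r, (r ≤ b ∨ (a ≤ r ∧ r ≤ k)) ∧ x r = v) := by
  have hbk : b < k := by omega
  refine ⟨seg x 0 b ++ (seg x a k).reverse, ⟨?_, ?_, ?_⟩, ?_, ?_⟩
  · simp only [List.length_append, List.length_reverse, length_seg]
    omega
  · rw [List.nodup_append']
    refine ⟨nodup_seg (by omega) hinj, by rw [List.nodup_reverse]; exact nodup_seg le_rfl hinj, ?_⟩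
    intro v hv hv2
    rw [List.mem_reverse] at hv2
    obtain ⟨r1, hr11, hr12, rfl⟩ := mem_seg.1 hv
    obtain ⟨r2, hr21, hr22, hr23⟩ := mem_seg.1 hv2
    have := hinj r2 r1 (by omega) (by omega) hr23
    omega
  · have hhd : (seg x 0 b ++ (seg x a k).reverse).head? = some (x 0) := by
      rw [List.head?_append, head?_seg (by omega)]
      rfl
    rw [hhd]
    have heq : (seg x 0 b ++ (seg x a k).reverse) ++ (some (x 0)).toList
        = seg x 0 b ++ ((seg x a k).reverse ++ [x 0]) := by simp
    rw [heq]
    refine List.isChain_append.2 ⟨chain'_seg (fun r h1 h2 => hadj r (by omega)), ?_, ?_⟩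
    · refine List.isChain_append.2
        ⟨chain'_reverse_adj (chain'_seg (fun r h1 h2 => hadj r (by omega))),
          List.isChain_singleton _, ?_⟩
      intro p hp q hq
      rw [List.getLast?_reverse, head?_seg hak] at hp
      have hp' : p = x a := (by simpa using hp : x a = p).symm
      subst hp'
      have hq' : q = x 0 := (by simpa using hq : x 0 = q).symm
      subst hq'
      exact hadja0.symm
    · intro p hp q hq
      rw [getLast?_seg (by omega)] at hp
      have hp' : p = x b := (by simpa using hp : x b = p).symm
      subst hp'
      rw [List.head?_append, List.head?_reverse, getLast?_seg hak] at hq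
      have hq' : q = x k := (by simpa using hq : x k = q).symm
      subst hq'
      exact hadjbk.symm
  · simp only [List.length_append, List.length_reverse, length_seg]
    omega
  · intro v
    constructor
    · intro hv
      rcases List.mem_append.1 hv with hv | hv
      · obtain ⟨r, h1, h2, h3'⟩ := mem_seg.1 hv
        exact ⟨r, Or.inl h2, h3'⟩
      · rw [List.mem_reverse] at hv
        obtain ⟨r, h1, h2, h3'⟩ := mem_seg.1 hv
        exact ⟨r, Or.inr ⟨h1, h2⟩, h3'⟩
    · rintro ⟨r, hr | hr, rfl⟩
      · exact List.mem_append_left _ (mem_seg.2 ⟨r, by omega, hr, rfl⟩)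
      · exact List.mem_append_right _ (by
          rw [List.mem_reverse]
          exact mem_seg.2 ⟨r, hr.1, hr.2, rfl⟩)

end BuildCycle

/-! ### Main core theorem -/

theorem core {V : Type u} [Fintype V] (G : SimpleGraph V) [DecidableRel G.Adj]
    (hconn : G.Connected)
    (hnocut : ∀ v : V, (G.induce ({v}ᶜ : Set V)).Connected)
    (hdeg : ∀ v : V, 2 ≤ G.degree v) :
    G.HasCycleOfLengthAtLeast (min (Fintype.card V) (2 * G.minDegree)) := by
  classical
  have hpre := hconn.preconnected
  obtain ⟨v0⟩ : Nonempty V := hconn.nonempty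
  obtain ⟨P, hP, hPmax⟩ := exists_longest_path G v0
  obtain ⟨hPne, hPnd, hPch⟩ := hP
  have hclosH : ∀ w, G.Adj (P.head hPne) w → w ∈ P := by
    intro w hw
    by_contra hwP
    have hnew : IsPathList G (w :: P) := by
      refine ⟨by simp, List.nodup_cons.2 ⟨hwP, hPnd⟩, List.isChain_cons.2 ⟨?_, hPch⟩⟩
      intro y hy
      rw [List.head?_eq_head hPne] at hy
      have : y = P.head hPne := (by simpa using hy : P.head hPne = y).symm
      subst this
      exact hw.symm
    have := hPmax _ hnew
    simp at this
  have hclosL : ∀ w, G.Adj (P.getLast hPne) w → w ∈ P := by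
    intro w hw
    by_contra hwP
    have hnew : IsPathList G (P ++ [w]) := by
      refine ⟨by simp, ?_, ?_⟩
      · rw [List.nodup_append']
        exact ⟨hPnd, List.nodup_singleton _,
          fun v hv hv2 => hwP ((List.mem_singleton.1 hv2) ▸ hv)⟩
      · refine List.isChain_append.2 ⟨hPch, List.isChain_singleton _, ?_⟩
        intro p hp q hq
        rw [List.getLast?_eq_getLast hPne] at hp
        have hp' : p = P.getLast hPne := (by simpa using hp : P.getLast hPne = p).symm
        have hq' : q = w := (by simpa using hq : w = q).symm
        subst hp'; subst hq'
        exact hw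
    have := hPmax _ hnew
    simp at this
  have hP3 : 3 ≤ P.length := by
    have hsub : G.neighborFinset (P.head hPne) ⊆ P.toFinset.erase (P.head hPne) := by
      intro w hw
      rw [SimpleGraph.mem_neighborFinset] at hw
      exact Finset.mem_erase.2 ⟨hw.ne', List.mem_toFinset.2 (hclosH w hw)⟩
    have h1 := Finset.card_le_card hsub
    have h2 : (P.toFinset.erase (P.head hPne)).card = P.toFinset.card - 1 :=
      Finset.card_erase_of_mem (List.mem_toFinset.2 (P.head_mem hPne))
    have h3 := P.toFinset_card_le
    have h4 := hdeg (P.head hPne)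
    have h5 : G.degree (P.head hPne) = (G.neighborFinset (P.head hPne)).card := rfl
    omega
  set k := P.length - 1 with hkdef
  have hPlen : P.length = k + 1 := by omega
  have hk2 : 2 ≤ k := by omega
  set x : ℕ → V := fun r => P.getD r v0 with hxdef
  have hxget : ∀ (r : ℕ) (hr : r < P.length), x r = P.get ⟨r, hr⟩ :=
    fun r hr => getD_eq_get hr v0
  have hinj : ∀ r q, r ≤ k → q ≤ k → x r = x q → r = q := by
    intro r q hr hq hxy
    rw [hxget r (by omega), hxget q (by omega)] at hxy
    have := (hPnd.get_inj_iff).1 hxy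
    exact congrArg Fin.val this
  have hadj : ∀ r, r < k → G.Adj (x r) (x (r + 1)) := by
    intro r hr
    rw [hxget r (by omega), hxget (r+1) (by omega)]
    exact List.isChain_iff_getElem.1 hPch r (by omega)
  have hmem : ∀ v, v ∈ P ↔ OnP x k v := by
    intro v
    constructor
    · intro hv
      obtain ⟨⟨n, hn⟩, hget⟩ := List.mem_iff_get.1 hv
      exact ⟨n, by omega, by rw [hxget n hn]; exact hget⟩
    · rintro ⟨t, htk, rfl⟩
      rw [hxget t (by omega)]
      exact List.get_mem _ _
  have hheadx : P.head hPne = x 0 := by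
    rw [hxget 0 (by omega)]
    cases P with
    | nil => exact absurd rfl hPne
    | cons p0 Ptl => rfl
  have hlastx : P.getLast hPne = x k := by
    rw [hxget k (by omega), List.getLast_eq_getElem]; rfl
  have hclos0 : ∀ v, G.Adj (x 0) v → OnP x k v :=
    fun v hv => (hmem v).1 (hclosH v (hheadx ▸ hv))
  have hclosk : ∀ v, G.Adj (x k) v → OnP x k v :=
    fun v hv => (hmem v).1 (hclosL v (hlastx ▸ hv))
  set S' : Finset ℕ := (Finset.range (k+1)).filter (fun s => G.Adj (x 0) (x s)) with hS'def
  set T : Finset ℕ := (Finset.range (k+1)).filter (fun t => G.Adj (x k) (x t)) with hTdef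
  have hS'mem : ∀ s, s ∈ S' ↔ (s ≤ k ∧ G.Adj (x 0) (x s)) := by
    intro s
    rw [hS'def, Finset.mem_filter, Finset.mem_range, Nat.lt_succ_iff]
  have hTmem : ∀ t, t ∈ T ↔ (t ≤ k ∧ G.Adj (x k) (x t)) := by
    intro t
    rw [hTdef, Finset.mem_filter, Finset.mem_range, Nat.lt_succ_iff]
  have hS'pos : ∀ s ∈ S', 1 ≤ s := by
    intro s hs
    rcases Nat.eq_zero_or_pos s with rfl | h
    · exact absurd ((hS'mem 0).1 hs).2 (G.irrefl)
    · exact h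
  have hTlt : ∀ t ∈ T, t < k := by
    intro t ht
    have h1 := (hTmem t).1 ht
    rcases eq_or_lt_of_le h1.1 with rfl | h
    · exact absurd h1.2 (G.irrefl)
    · exact h
  have h1S : 1 ∈ S' := (hS'mem 1).2 ⟨by omega, hadj 0 (by omega)⟩
  have hk1T : k - 1 ∈ T := by
    refine (hTmem (k-1)).2 ⟨by omega, ?_⟩
    have := hadj (k-1) (by omega)
    rw [show k - 1 + 1 = k by omega] at this
    exact this.symm
  have hS'card : S'.card = G.degree (x 0) := by
    have himg : S'.image x = G.neighborFinset (x 0) := by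
      ext w
      simp only [Finset.mem_image, SimpleGraph.mem_neighborFinset]
      constructor
      · rintro ⟨s, hs, rfl⟩
        exact ((hS'mem s).1 hs).2
      · intro hw
        obtain ⟨t, htk, rfl⟩ := hclos0 w hw
        exact ⟨t, (hS'mem t).2 ⟨htk, hw⟩, rfl⟩
    have hcim : (S'.image x).card = S'.card :=
      Finset.card_image_of_injOn (fun s hs q hq hsq =>
        hinj s q ((hS'mem s).1 hs).1 ((hS'mem q).1 hq).1 hsq)
    rw [← hcim, himg]
    rfl
  have hTcard : T.card = G.degree (x k) := by
    have himg : T.image x = G.neighborFinset (x k) := by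
      ext w
      simp only [Finset.mem_image, SimpleGraph.mem_neighborFinset]
      constructor
      · rintro ⟨t, ht, rfl⟩
        exact ((hTmem t).1 ht).2
      · intro hw
        obtain ⟨t, htk, rfl⟩ := hclosk w hw
        exact ⟨t, (hTmem t).2 ⟨htk, hw⟩, rfl⟩
    have hcim : (T.image x).card = T.card :=
      Finset.card_image_of_injOn (fun s hs q hq hsq =>
        hinj s q ((hTmem s).1 hs).1 ((hTmem q).1 hq).1 hsq)
    rw [← hcim, himg]
    rfl
  have hdegsum : 2 * G.minDegree ≤ S'.card + T.card := by
    have h1 := G.minDegree_le_degree (x 0)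
    have h2 := G.minDegree_le_degree (x k)
    omega
  by_cases hcross : ∃ t, t ∈ T ∧ (t + 1) ∈ S'
  · -- Case 1 : spanning cycle
    obtain ⟨t, htT, htS⟩ := hcross
    have htk : t < k := hTlt t htT
    have ht1k : t + 1 ≤ k := by omega
    obtain ⟨lc, hcyc, hlen, hmemlc⟩ := buildPairCycle hinj hadj t (t+1) (by omega) ht1k
      ((hTmem t).1 htT).2 ((hS'mem (t+1)).1 htS).2 (by omega)
    have hlck : lc.length = k + 1 := by rw [hlen]; omega
    have hcover : ∀ v, v ∈ lc ↔ OnP x k v := by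
      intro v
      rw [hmemlc v]
      constructor
      · rintro ⟨r, hr, rfl⟩
        exact ⟨r, by omega, rfl⟩
      · rintro ⟨r, hr, rfl⟩
        exact ⟨r, by omega, rfl⟩
    have hspan : Fintype.card V ≤ lc.length := by
      by_contra hlt
      push_neg at hlt
      have hex : ∃ w, w ∉ lc := by
        by_contra hno
        push_neg at hno
        have hsub : (Finset.univ : Finset V) ⊆ lc.toFinset :=
          fun w _ => List.mem_toFinset.2 (hno w)
        have hcc := Finset.card_le_card hsub
        rw [Finset.card_univ] at hcc
        have := lc.toFinset_card_le
        omega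
      obtain ⟨w, hw⟩ := hex
      have hx0lc : x 0 ∈ lc := (hcover _).2 ⟨0, by omega, rfl⟩
      obtain ⟨q⟩ := hpre (x 0) w
      obtain ⟨aa, bb, haa, hbb, hadjab⟩ := exists_adj_boundary_list lc q.support
        (q.isChain_adj_support)
        (fun a0 ha0 => by
          rw [q.support_eq_cons] at ha0
          have : a0 = x 0 := (Option.some.inj ha0).symm
          exact this ▸ hx0lc)
        ⟨w, q.end_mem_support, hw⟩
      obtain ⟨pre, suf, hlc⟩ := List.append_of_mem haa
      have hrot : lc.rotate pre.length = aa :: (suf ++ pre) := by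
        rw [hlc, List.rotate_eq_drop_append_take (by simp), List.drop_left, List.take_left]
        simp
      have hcyc2 := hcyc.rotate pre.length
      rw [hrot] at hcyc2
      have hnew : IsPathList G (bb :: aa :: (suf ++ pre)) := by
        refine ⟨by simp, ?_, ?_⟩
        · rw [List.nodup_cons]
          refine ⟨?_, hcyc2.2.1⟩
          intro hc
          apply hbb
          rw [← List.mem_rotate (n := pre.length), hrot]
          exact hc
        · rw [List.isChain_cons]
          refine ⟨fun y hy => ?_, ?_⟩
          · have : y = aa := (by simpa using hy : aa = y).symm
            subst this
            exact hadjab.symm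
          · exact hcyc2.2.2.prefix ⟨(aa :: (suf ++ pre)).head?.toList, rfl⟩
      have hcontra := hPmax _ hnew
      have hlc2 : lc.length = pre.length + suf.length + 1 := by rw [hlc]; simp; omega
      simp only [List.length_cons, List.length_append] at hcontra
      omega
    obtain ⟨u, cw, hcw, hcwlen⟩ := hcyc.hasCycle
    exact ⟨u, cw, hcw, by rw [hcwlen]; exact le_trans (min_le_left _ _) hspan⟩
  · by_cases hpair : ∃ pq : ℕ × ℕ, pq.1 ∈ T ∧ pq.2 ∈ S' ∧ pq.1 < pq.2
    · -- Case 2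
      set ds : Set ℕ := {d | ∃ p q, p ∈ T ∧ q ∈ S' ∧ p < q ∧ q - p = d} with hdsdef
      have hdsne : ds.Nonempty := by
        obtain ⟨⟨p, q⟩, h1, h2, h3⟩ := hpair
        exact ⟨q - p, p, q, h1, h2, h3, rfl⟩
      obtain ⟨b, a, hbT, haS, hba, hgd⟩ := Nat.sInf_mem hdsne
      have hgmin : ∀ p q, p ∈ T → q ∈ S' → p < q → a - b ≤ q - p := by
        intro p q h1 h2 h3
        rw [hgd]
        exact Nat.sInf_le ⟨p, q, h1, h2, h3, rfl⟩
      have hab2 : 2 ≤ a - b := by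
        by_contra h
        push_neg at h
        have : a = b + 1 := by omega
        exact hcross ⟨b, hbT, this ▸ haS⟩
      have hak : a ≤ k := ((hS'mem a).1 haS).1
      have hnoS : ∀ s ∈ S', ¬ (b < s ∧ s < a) := by
        rintro s hs ⟨h1, h2⟩
        have := hgmin b s hbT hs h1
        omega
      have hnoT : ∀ t ∈ T, ¬ (b < t ∧ t < a) := by
        rintro t ht ⟨h1, h2⟩
        have := hgmin t a ht haS h2
        omega
      have hb1 : 1 ≤ b := by
        by_contra h
        push_neg at h
        exact hnoS 1 h1S ⟨by omega, by omega⟩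
      have hak1 : a ≤ k - 1 := by
        by_contra h
        push_neg at h
        exact hnoT (k-1) hk1T ⟨by omega, by omega⟩
      obtain ⟨lc, hcyc, hlen, hmemlc⟩ := buildPairCycle hinj hadj b a hba hak
        ((hTmem b).1 hbT).2 ((hS'mem a).1 haS).2 (by omega)
      have hcount : S'.card + T.card ≤ lc.length := by
        have hdisj : Disjoint (S'.image (· - 1)) T := by
          rw [Finset.disjoint_left]
          rintro d hd hdT
          obtain ⟨s, hsS, rfl⟩ := Finset.mem_image.1 hd
          have hs1 : 1 ≤ s := hS'pos s hsS
          have heq : s - 1 + 1 = s := by omega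
          exact hcross ⟨s - 1, hdT, heq ▸ hsS⟩
        have hcard1 : (S'.image (· - 1)).card = S'.card := by
          refine Finset.card_image_of_injOn ?_
          intro s hs q hq h
          have h' : s - 1 = q - 1 := h
          have h1 := hS'pos s (Finset.mem_coe.1 hs)
          have h2 := hS'pos q (Finset.mem_coe.1 hq)
          omega
        have hsubD : (S'.image (· - 1)) ∪ T ⊆ Finset.Icc 0 b ∪ Finset.Icc (a-1) (k-1) := by
          intro d hd
          rcases Finset.mem_union.1 hd with hd | hd
          · obtain ⟨s, hsS, rfl⟩ := Finset.mem_image.1 hd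
            have hs := (hS'mem s).1 hsS
            rcases le_or_gt s b with h1 | h1
            · exact Finset.mem_union_left _ (Finset.mem_Icc.2 ⟨by omega, by omega⟩)
            · have hsa : a ≤ s := by
                by_contra hc
                push_neg at hc
                exact hnoS s hsS ⟨h1, hc⟩
              have hsk : s ≤ k := hs.1
              have hs0 : 1 ≤ s := hS'pos s hsS
              exact Finset.mem_union_right _ (Finset.mem_Icc.2 ⟨by omega, by omega⟩)
          · have ht := (hTmem d).1 hd
            have hdk : d < k := hTlt d hd
            rcases le_or_gt d b with h1 | h1
            · exact Finset.mem_union_left _ (Finset.mem_Icc.2 ⟨by omega, by omega⟩)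
            · have hda : a ≤ d := by
                by_contra hc
                push_neg at hc
                exact hnoT d hd ⟨h1, hc⟩
              exact Finset.mem_union_right _ (Finset.mem_Icc.2 ⟨by omega, by omega⟩)
        have hDcard : S'.card + T.card ≤ (b + 1) + (k - 1 + 1 - (a - 1)) := by
          calc S'.card + T.card = ((S'.image (· - 1)) ∪ T).card := by
                rw [Finset.card_union_of_disjoint hdisj, hcard1]
            _ ≤ (Finset.Icc 0 b ∪ Finset.Icc (a-1) (k-1)).card := Finset.card_le_card hsubD
            _ ≤ (Finset.Icc 0 b).card + (Finset.Icc (a-1) (k-1)).card := Finset.card_union_le _ _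
            _ = (b + 1) + (k - 1 + 1 - (a - 1)) := by rw [Nat.card_Icc, Nat.card_Icc]; omega
        rw [hlen]
        omega
      obtain ⟨u, cw, hcw, hcwlen⟩ := hcyc.hasCycle
      refine ⟨u, cw, hcw, ?_⟩
      rw [hcwlen]
      exact le_trans (min_le_right _ _) (le_trans hdegsum hcount)
    · -- Case 3
      push_neg at hpair
      have hS'ne : S'.Nonempty := ⟨1, h1S⟩
      have hTne : T.Nonempty := ⟨k - 1, hk1T⟩
      set i := S'.max' hS'ne with hidef
      set j := T.min' hTne with hjdef
      have hiS : i ∈ S' := S'.max'_mem hS'ne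
      have hjT : j ∈ T := T.min'_mem hTne
      have hij : i ≤ j := by
        have := hpair (j, i) hjT hiS
        omega
      obtain ⟨l, hcyc, hcount⟩ := case3 (G := G) (x := x) (k := k) (i := i) (j := j)
        (S' := S') (T := T) hinj hadj hnocut
        (fun s hs => ⟨hS'pos s hs, S'.le_max' s hs⟩) hiS
        (fun s hs => ((hS'mem s).1 hs).2)
        (fun t ht => ⟨T.min'_le t ht, hTlt t ht⟩) hjT
        (fun t ht => ((hTmem t).1 ht).2)
        (hS'pos 1 h1S |>.trans (S'.le_max' 1 h1S)) hij
      obtain ⟨u, cw, hcw, hcwlen⟩ := hcyc.hasCycle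
      refine ⟨u, cw, hcw, ?_⟩
      rw [hcwlen]
      exact le_trans (min_le_right _ _) (le_trans hdegsum hcount)

end DiracAux

/-- Every 2-connected graph contains a cycle of length at least `min{n, 2δ}`. -/
theorem cycle_of_two_connected
    {V : Type*} [Fintype V] (G : SimpleGraph V) [DecidableRel G.Adj]
    (hκ : 2 ≤ G.vConn) :
    G.HasCycleOfLengthAtLeast (min (Fintype.card V) (2 * G.minDegree)) := by
  classical
  have hnotcut : ∀ S : Set V, S.ncard ≤ 1 → ¬ G.IsCutSet S := by
    intro S hS hcut
    have h1 : G.vConn ≤ S.ncard := Nat.sInf_le ⟨S, hcut, rfl⟩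
    omega
  have hemp := hnotcut ∅ (by simp)
  rw [SimpleGraph.IsCutSet, not_or, not_not] at hemp
  obtain ⟨hconn0, hbig⟩ := hemp
  rw [Set.compl_empty] at hconn0 hbig
  have hconn : G.Connected := ((SimpleGraph.induceUnivIso G).connected_iff).1 hconn0
  have hnocut : ∀ v : V, (G.induce ({v}ᶜ : Set V)).Connected := by
    intro v
    have h := hnotcut {v} (by simp)
    rw [SimpleGraph.IsCutSet, not_or, not_not] at h
    exact h.1
  have hdeg : ∀ v : V, 2 ≤ G.degree v := by
    intro v
    by_contra hcon
    push_neg at hcon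
    have hcut : G.IsCutSet (G.neighborSet v) := by
      by_cases hsmall : ((G.neighborSet v)ᶜ : Set V).ncard ≤ 1
      · exact Or.inr hsmall
      · refine Or.inl ?_
        intro hcc
        have hvmem : v ∈ ((G.neighborSet v)ᶜ : Set V) := by
          simp [SimpleGraph.neighborSet]
        push_neg at hsmall
        obtain ⟨w, hw, hwv⟩ := Set.exists_ne_of_one_lt_ncard hsmall v
        obtain ⟨p⟩ := hcc.preconnected ⟨v, hvmem⟩ ⟨w, hw⟩
        cases p with
        | nil => exact hwv rfl
        | cons h q =>
          rename_i u'
          have hadj : G.Adj v ↑u' := h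
          exact u'.2 hadj
    have h1 : G.vConn ≤ (G.neighborSet v).ncard := Nat.sInf_le ⟨_, hcut, rfl⟩
    have h2 : (G.neighborSet v).ncard = G.degree v := by
      rw [Set.ncard_eq_toFinset_card']
      simp [SimpleGraph.neighborFinset, SimpleGraph.degree]
    omega
  exact DiracAux.core G hconn hnocut hdeg
end

section
/- Let C be a cycle and (Z₁, Z₂) a nontrivial (C, r)-scheme. Then |V(C)| ≥ min{2(|Z₁| + |Z₂|) + 2r − 6, r(|Z₁| + |Z₂|)/2}. -/
open SimpleGraph

namespace NashAux

open Finset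
open Fin.NatCast Fin.CommRing

variable {N : ℕ}

/-- walking forward `j` steps bounds the graph distance in the cycle -/
lemma dist_add_le (u : Fin (N+3)) (j : ℕ) :
    (cycleGraph (N+3)).dist u (u + (j : Fin (N+3))) ≤ j := by
  induction j with
  | zero => simp
  | succ j ih =>
    have hadj : (cycleGraph (N+3)).Adj (u + (j : Fin (N+3))) (u + ((j+1 : ℕ) : Fin (N+3))) := by
      rw [cycleGraph_adj]
      right
      push_cast
      ring
    calc (cycleGraph (N+3)).dist u (u + ((j+1:ℕ) : Fin (N+3)))
        ≤ (cycleGraph (N+3)).dist u (u + (j : Fin (N+3)))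
          + (cycleGraph (N+3)).dist (u + (j : Fin (N+3))) (u + ((j+1:ℕ) : Fin (N+3))) :=
          Connected.dist_triangle cycleGraph_connected
      _ ≤ j + 1 := by
          have := le_of_eq (dist_eq_one_iff_adj.2 hadj)
          omega

/-- the forward gap from `v` to the nearest other element of `S` -/
noncomputable def gap (S : Finset (Fin (N+3))) (v : Fin (N+3)) : ℕ :=
  sInf ((fun w => (w - v).val) '' ((S.erase v) : Set (Fin (N+3))))

lemma gap_exists {S : Finset (Fin (N+3))} {v : Fin (N+3)}
    (h : (S.erase v).Nonempty) :
    ∃ w ∈ S, w ≠ v ∧ (w - v).val = gap S v := by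
  have hne : ((fun w => (w - v).val) '' ((S.erase v) : Set (Fin (N+3)))).Nonempty := by
    obtain ⟨w, hw⟩ := h
    exact ⟨(w - v).val, ⟨w, Finset.mem_coe.2 hw, rfl⟩⟩
  obtain ⟨w, hw, hval⟩ := Nat.sInf_mem hne
  rw [Finset.mem_coe, Finset.mem_erase] at hw
  exact ⟨w, hw.2, hw.1, hval⟩

lemma gap_le {S : Finset (Fin (N+3))} {v w : Fin (N+3)}
    (hw : w ∈ S) (hne : w ≠ v) : gap S v ≤ (w - v).val :=
  Nat.sInf_le ⟨w, by simp [hw, hne], rfl⟩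

lemma gap_pos {S : Finset (Fin (N+3))} {v : Fin (N+3)}
    (h : (S.erase v).Nonempty) : 0 < gap S v := by
  obtain ⟨w, _, hne, hval⟩ := gap_exists h
  have : w - v ≠ 0 := sub_ne_zero_of_ne hne
  have : (w - v).val ≠ 0 := fun h => this (Fin.ext (by simp [h]))
  omega

lemma gap_lt {S : Finset (Fin (N+3))} {v : Fin (N+3)}
    (h : (S.erase v).Nonempty) : gap S v < N + 3 := by
  obtain ⟨w, _, _, hval⟩ := gap_exists h
  exact hval ▸ (w - v).isLt

/-- the next element of `S` after `v`, going forward around the cycle -/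
noncomputable def nxt (S : Finset (Fin (N+3))) (v : Fin (N+3)) : Fin (N+3) :=
  v + ((gap S v : ℕ) : Fin (N+3))

lemma nxt_mem {S : Finset (Fin (N+3))} {v : Fin (N+3)}
    (h : (S.erase v).Nonempty) : nxt S v ∈ S := by
  obtain ⟨w, hw, hne, hval⟩ := gap_exists h
  have : nxt S v = w := by
    rw [nxt, ← hval, Fin.cast_val_eq_self]; ring
  rw [this]; exact hw

lemma nxt_ne {S : Finset (Fin (N+3))} {v : Fin (N+3)}
    (h : (S.erase v).Nonempty) : nxt S v ≠ v := by
  intro hEq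
  have h1 : (nxt S v - v).val = gap S v := by
    rw [nxt]
    have : v + ((gap S v : ℕ) : Fin (N+3)) - v = ((gap S v : ℕ) : Fin (N+3)) := by ring
    rw [this, Fin.val_cast_of_lt (gap_lt h)]
  rw [hEq] at h1
  simp only [sub_self, Fin.val_zero] at h1
  have := gap_pos h
  omega

lemma dist_nxt_le {S : Finset (Fin (N+3))} (v : Fin (N+3)) :
    (cycleGraph (N+3)).dist v (nxt S v) ≤ gap S v := by
  rw [nxt]
  exact dist_add_le v (gap S v)

/-- the arc of length `gap S v` starting at `v` -/
noncomputable def arc (S : Finset (Fin (N+3))) (v : Fin (N+3)) : Finset (Fin (N+3)) :=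
  (Finset.range (gap S v)).image fun (j : ℕ) => v + (j : Fin (N+3))

lemma mem_arc {S : Finset (Fin (N+3))} {v x : Fin (N+3)} (hlt : gap S v < N + 3) :
    x ∈ arc S v ↔ (x - v).val < gap S v := by
  constructor
  · rintro hx
    rw [arc, Finset.mem_image] at hx
    obtain ⟨j, hj, rfl⟩ := hx
    rw [Finset.mem_range] at hj
    have : (v + (j : Fin (N+3)) - v) = (j : Fin (N+3)) := by ring
    rw [this, Fin.val_cast_of_lt (by omega)]
    exact hj
  · intro hx
    rw [arc, Finset.mem_image]
    exact ⟨(x - v).val, Finset.mem_range.2 hx, by rw [Fin.cast_val_eq_self]; ring⟩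

lemma arc_card {S : Finset (Fin (N+3))} {v : Fin (N+3)} (hlt : gap S v < N + 3) :
    (arc S v).card = gap S v := by
  rw [arc, Finset.card_image_of_injOn, Finset.card_range]
  intro i hi j hj hij
  rw [Finset.mem_coe, Finset.mem_range] at hi hj
  simp only at hij
  have : ((i : ℕ) : Fin (N+3)) = ((j : ℕ) : Fin (N+3)) := add_left_cancel hij
  have hvi : ((i : ℕ) : Fin (N+3)).val = i := Fin.val_cast_of_lt (by omega)
  have hvj : ((j : ℕ) : Fin (N+3)).val = j := Fin.val_cast_of_lt (by omega)
  rw [← hvi, ← hvj, this]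

/-- arcs contain no point of `S` other than their base point -/
lemma eq_of_mem_arc {S : Finset (Fin (N+3))} {v w : Fin (N+3)}
    (hv : (S.erase v).Nonempty) (hw : w ∈ S) (hmem : w ∈ arc S v) : w = v := by
  by_contra hne
  have h1 := (mem_arc (gap_lt hv)).1 hmem
  have h2 := gap_le hw hne
  omega

lemma arc_disjoint {S : Finset (Fin (N+3))} (hS : 2 ≤ S.card) {v w : Fin (N+3)}
    (hv : v ∈ S) (hw : w ∈ S) (hne : v ≠ w) : Disjoint (arc S v) (arc S w) := by
  have hev : (S.erase v).Nonempty := Finset.card_pos.1 (by rw [Finset.card_erase_of_mem hv]; omega)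
  have hew : (S.erase w).Nonempty := Finset.card_pos.1 (by rw [Finset.card_erase_of_mem hw]; omega)
  rw [Finset.disjoint_left]
  intro x hxv hxw
  have hiv := (mem_arc (gap_lt hev)).1 hxv
  have hiw := (mem_arc (gap_lt hew)).1 hxw
  have key : ∀ (a b : Fin (N+3)), a ∈ S → b ∈ S → a ≠ b →
      (x - a).val ≤ (x - b).val → (x - a).val < gap S a → (x - b).val < gap S b → False := by
    intro a b ha hb hab hle hga hgb
    have hsub : a - b = (x - b) - (x - a) := by ring
    have hvv : (a - b).val = (x - b).val - (x - a).val := by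
      rw [hsub]
      rw [Fin.sub_val_of_le]
      · exact hle
    have := gap_le ha hab
    have hz : (a - b) ≠ 0 := sub_ne_zero_of_ne hab
    have hz' : (a - b).val ≠ 0 := fun h => hz (Fin.ext (by simp [h]))
    omega
  rcases le_total ((x - v).val) ((x - w).val) with h | h
  · exact key v w hv hw hne h hiv hiw
  · exact key w v hw hv hne.symm h hiw hiv

/-- the gaps of the points of `S` sum to at most `N + 3` -/
lemma sum_gap_le {S : Finset (Fin (N+3))} (hS : 2 ≤ S.card) :
    ∑ v ∈ S, gap S v ≤ N + 3 := by
  have herase : ∀ v ∈ S, (S.erase v).Nonempty := fun v hv =>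
    Finset.card_pos.1 (by rw [Finset.card_erase_of_mem hv]; omega)
  calc ∑ v ∈ S, gap S v = ∑ v ∈ S, (arc S v).card := by
        apply Finset.sum_congr rfl
        intro v hv
        rw [arc_card (gap_lt (herase v hv))]
    _ = (S.biUnion (arc S)).card := (Finset.card_biUnion (fun v hv w hw hne =>
          arc_disjoint hS hv hw hne)).symm
    _ ≤ Fintype.card (Fin (N+3)) := Finset.card_le_univ _
    _ = N + 3 := by simp

/-- a nonempty subset of `S` closed under `nxt` is all of `S` -/
lemma closure {S T : Finset (Fin (N+3))} (hS : 2 ≤ S.card) (hTS : T ⊆ S)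
    (hT : T.Nonempty) (hcl : ∀ v ∈ T, nxt S v ∈ T) : ∀ w ∈ S, w ∈ T := by
  have herase : ∀ v ∈ S, (S.erase v).Nonempty := fun v hv =>
    Finset.card_pos.1 (by rw [Finset.card_erase_of_mem hv]; omega)
  obtain ⟨v₀, hv₀⟩ := hT
  have hU : ∀ j : ℕ, ∃ v ∈ T, v₀ + (j : Fin (N+3)) ∈ arc S v := by
    intro j
    induction j with
    | zero =>
      refine ⟨v₀, hv₀, (mem_arc (gap_lt (herase v₀ (hTS hv₀)))).2 ?_⟩
      simp only [Nat.cast_zero, add_zero, sub_self, Fin.val_zero]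
      exact gap_pos (herase v₀ (hTS hv₀))
    | succ j ih =>
      obtain ⟨v, hvT, hmem⟩ := ih
      have hvS := hTS hvT
      have hlt := gap_lt (herase v hvS)
      have hi := (mem_arc hlt).1 hmem
      set i := ((v₀ + (j : Fin (N+3))) - v).val with hidef
      have hx : v₀ + (j : Fin (N+3)) = v + (i : Fin (N+3)) := by
        rw [hidef, Fin.cast_val_eq_self]; ring
      have hx1 : v₀ + ((j+1 : ℕ) : Fin (N+3)) = v + ((i+1 : ℕ) : Fin (N+3)) := by
        push_cast
        rw [← add_assoc, hx]; ring
      by_cases hcase : i + 1 < gap S v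
      · refine ⟨v, hvT, (mem_arc hlt).2 ?_⟩
        rw [hx1]
        have : (v + ((i+1 : ℕ) : Fin (N+3)) - v) = ((i+1 : ℕ) : Fin (N+3)) := by ring
        rw [this, Fin.val_cast_of_lt (by omega)]
        exact hcase
      · have hieq : i + 1 = gap S v := by omega
        have hnxt : v₀ + ((j+1 : ℕ) : Fin (N+3)) = nxt S v := by
          rw [hx1, nxt, hieq]
        have hnT : nxt S v ∈ T := hcl v hvT
        refine ⟨nxt S v, hnT, (mem_arc (gap_lt (herase _ (hTS hnT)))).2 ?_⟩
        rw [hnxt]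
        simp only [sub_self, Fin.val_zero]
        exact gap_pos (herase _ (hTS hnT))
  intro w hw
  obtain ⟨v, hvT, hmem⟩ := hU ((w - v₀).val)
  rw [Fin.cast_val_eq_self] at hmem
  have : v₀ + (w - v₀) = w := by ring
  rw [this] at hmem
  have := eq_of_mem_arc (herase v (hTS hvT)) hw hmem
  rwa [this]

end NashAux

open NashAux Finset in
/-- **Nash-Williams' lemma.** If `(Z₁, Z₂)` is a nontrivial `(C, r)`-scheme on a cycle `C`
with `n` vertices (vertices of the same set at distance `≥ 2` along `C`, vertices of
different sets at distance `≥ r`, and the pair admitting a system of distinct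
representatives), then `n ≥ min{2(|Z₁| + |Z₂|) + 2r − 6, r(|Z₁| + |Z₂|)/2}`. -/
theorem cycle_scheme_two (n r : ℕ) (hn : 3 ≤ n) (hr : 2 ≤ r)
    (Z₁ Z₂ : Finset (Fin n))
    (h₁ : ∀ x ∈ Z₁, ∀ y ∈ Z₁, x ≠ y → 2 ≤ (cycleGraph n).dist x y)
    (h₂ : ∀ x ∈ Z₂, ∀ y ∈ Z₂, x ≠ y → 2 ≤ (cycleGraph n).dist x y)
    (hcross : ∀ x ∈ Z₁, ∀ y ∈ Z₂, x ≠ y → r ≤ (cycleGraph n).dist x y)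
    (hsdr : ∃ x₁ ∈ Z₁, ∃ x₂ ∈ Z₂, x₁ ≠ x₂) :
    (n : ℚ) ≥ min (2 * (Z₁.card + Z₂.card) + 2 * r - 6)
      (r * (Z₁.card + Z₂.card) / 2) := by
  classical
  obtain ⟨N, rfl⟩ : ∃ N, n = N + 3 := ⟨n - 3, by omega⟩
  obtain ⟨x₁, hx₁, x₂, hx₂, hx12⟩ := hsdr
  set S : Finset (Fin (N+3)) := Z₁ ∪ Z₂ with hSdef
  have hx₁S : x₁ ∈ S := mem_union_left _ hx₁
  have hx₂S : x₂ ∈ S := mem_union_right _ hx₂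
  have hS : 2 ≤ S.card := by
    have hsub : ({x₁, x₂} : Finset (Fin (N+3))) ⊆ S := by
      intro z hz
      rcases mem_insert.1 hz with rfl | hz
      · exact hx₁S
      · rw [mem_singleton.1 hz]; exact hx₂S
    calc 2 = ({x₁, x₂} : Finset (Fin (N+3))).card := (card_pair hx12).symm
      _ ≤ S.card := card_le_card hsub
  have herase : ∀ v ∈ S, (S.erase v).Nonempty := fun v hv =>
    Finset.card_pos.1 (by rw [Finset.card_erase_of_mem hv]; omega)
  -- the "cross" predicate on segments (v, nxt v)
  set cross : Fin (N+3) → Prop :=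
    fun v => (v ∈ Z₁ ∧ nxt S v ∈ Z₂) ∨ (v ∈ Z₂ ∧ nxt S v ∈ Z₁) with hcrossdef
  -- weight bound on gaps
  have hweight : ∀ v ∈ S, (if cross v then r else 2) ≤ gap S v := by
    intro v hv
    have hnm := nxt_mem (herase v hv)
    have hnn := nxt_ne (herase v hv)
    have hd := dist_nxt_le (S := S) v
    by_cases hc : cross v
    · rw [if_pos hc]
      rcases hc with ⟨hv1, hn2⟩ | ⟨hv2, hn1⟩
      · exact le_trans (hcross v hv1 (nxt S v) hn2 (Ne.symm hnn)) hd
      · have := hcross (nxt S v) hn1 v hv2 hnn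
        rw [SimpleGraph.dist_comm] at this
        exact le_trans this hd
    · rw [if_neg hc]
      have hc1 : ¬(v ∈ Z₁ ∧ nxt S v ∈ Z₂) := fun h => hc (Or.inl h)
      have hc2 : ¬(v ∈ Z₂ ∧ nxt S v ∈ Z₁) := fun h => hc (Or.inr h)
      rcases mem_union.1 hv with hv1 | hv2
      · have hn1 : nxt S v ∈ Z₁ := by
          rcases mem_union.1 hnm with h | h
          · exact h
          · exact absurd ⟨hv1, h⟩ hc1
        exact le_trans (h₁ v hv1 (nxt S v) hn1 (Ne.symm hnn)) hd
      · have hn2 : nxt S v ∈ Z₂ := by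
          rcases mem_union.1 hnm with h | h
          · exact absurd ⟨hv2, h⟩ hc2
          · exact h
        exact le_trans (h₂ v hv2 (nxt S v) hn2 (Ne.symm hnn)) hd
  set K : ℕ := (S.filter cross).card with hKdef
  set K' : ℕ := (S.filter (fun v => ¬ cross v)).card with hK'def
  have hKK' : K + K' = S.card := by
    rw [hKdef, hK'def]
    exact card_filter_add_card_filter_not cross
  have hsum : r * K + 2 * K' ≤ N + 3 := by
    calc r * K + 2 * K'
        = ∑ _v ∈ S.filter cross, r + ∑ _v ∈ S.filter (fun v => ¬ cross v), 2 := by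
          rw [Finset.sum_const, Finset.sum_const, smul_eq_mul, smul_eq_mul]; ring
      _ = ∑ v ∈ S, (if cross v then r else 2) := (Finset.sum_ite _ _).symm
      _ ≤ ∑ v ∈ S, gap S v := Finset.sum_le_sum hweight
      _ ≤ N + 3 := sum_gap_le hS
  set C : ℕ := (Z₁ ∩ Z₂).card with hCdef
  have hXS : Z₁ ∩ Z₂ ⊆ S := fun z hz => mem_union_left _ (mem_inter.1 hz).1
  have hsC : S.card + C = Z₁.card + Z₂.card := card_union_add_card_inter Z₁ Z₂
  have hCm : C ≤ S.card := card_le_card hXS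
  -- a vertex in the intersection makes both incident segments cross
  have hXcross : ∀ v ∈ S, (v ∈ Z₁ ∩ Z₂ ∨ nxt S v ∈ Z₁ ∩ Z₂) → cross v := by
    intro v hv hor
    have hnm := nxt_mem (herase v hv)
    rcases hor with hvX | hnX
    · rcases mem_union.1 hnm with h | h
      · exact Or.inr ⟨(mem_inter.1 hvX).2, h⟩
      · exact Or.inl ⟨(mem_inter.1 hvX).1, h⟩
    · rcases mem_union.1 hv with h | h
      · exact Or.inl ⟨h, (mem_inter.1 hnX).2⟩
      · exact Or.inr ⟨h, (mem_inter.1 hnX).1⟩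
  -- Structural fact A : if the intersection is empty then at least two cross segments
  have factA : C = 0 → 2 ≤ K := by
    intro hC0
    have hdisj : Z₁ ∩ Z₂ = ∅ := card_eq_zero.1 hC0
    have hdisj' : ∀ z, z ∈ Z₁ → z ∈ Z₂ → False := by
      intro z hz1 hz2
      have : z ∈ Z₁ ∩ Z₂ := mem_inter.2 ⟨hz1, hz2⟩
      rw [hdisj] at this
      exact notMem_empty z this
    -- T₁ : elements of Z₁; not closed under nxt
    have hT₁ : ¬ (∀ v ∈ S.filter (· ∈ Z₁), nxt S v ∈ S.filter (· ∈ Z₁)) := by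
      intro hcl
      have := closure hS (filter_subset _ _) ⟨x₁, mem_filter.2 ⟨hx₁S, hx₁⟩⟩ hcl x₂ hx₂S
      exact hdisj' x₂ (mem_filter.1 this).2 hx₂
    push_neg at hT₁
    obtain ⟨v, hvT, hvn⟩ := hT₁
    have hvS := (mem_filter.1 hvT).1
    have hv1 := (mem_filter.1 hvT).2
    have hnmv := nxt_mem (herase v hvS)
    have hn2 : nxt S v ∈ Z₂ := by
      rcases mem_union.1 hnmv with h | h
      · exact absurd (mem_filter.2 ⟨hnmv, h⟩) hvn
      · exact h
    have hcv : cross v := Or.inl ⟨hv1, hn2⟩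
    -- T₂ : elements of Z₂; not closed under nxt
    have hT₂ : ¬ (∀ w ∈ S.filter (· ∈ Z₂), nxt S w ∈ S.filter (· ∈ Z₂)) := by
      intro hcl
      have := closure hS (filter_subset _ _) ⟨x₂, mem_filter.2 ⟨hx₂S, hx₂⟩⟩ hcl x₁ hx₁S
      exact hdisj' x₁ hx₁ (mem_filter.1 this).2
    push_neg at hT₂
    obtain ⟨w, hwT, hwn⟩ := hT₂
    have hwS := (mem_filter.1 hwT).1
    have hw2 := (mem_filter.1 hwT).2
    have hnmw := nxt_mem (herase w hwS)
    have hn1 : nxt S w ∈ Z₁ := by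
      rcases mem_union.1 hnmw with h | h
      · exact h
      · exact absurd (mem_filter.2 ⟨hnmw, h⟩) hwn
    have hcw : cross w := Or.inr ⟨hw2, hn1⟩
    have hvw : v ≠ w := by
      intro hEq
      exact hdisj' v hv1 (hEq ▸ hw2)
    have hsub : ({v, w} : Finset (Fin (N+3))) ⊆ S.filter cross := by
      intro z hz
      rcases mem_insert.1 hz with rfl | hz
      · exact mem_filter.2 ⟨hvS, hcv⟩
      · rw [mem_singleton.1 hz]; exact mem_filter.2 ⟨hwS, hcw⟩
    calc 2 = ({v, w} : Finset (Fin (N+3))).card := (card_pair hvw).symm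
      _ ≤ K := card_le_card hsub
  -- Structural fact B : if intersection nonempty and not everything, then K ≥ C + 1
  have factB : 1 ≤ C → (∃ u ∈ S, u ∉ Z₁ ∩ Z₂) → C + 1 ≤ K := by
    intro hC1 ⟨u, huS, huX⟩
    obtain ⟨z, hz⟩ := card_pos.1 (by omega : 0 < C)
    have hT : ¬ (∀ v ∈ S.filter (· ∉ Z₁ ∩ Z₂), nxt S v ∈ S.filter (· ∉ Z₁ ∩ Z₂)) := by
      intro hcl
      have := closure hS (filter_subset _ _) ⟨u, mem_filter.2 ⟨huS, huX⟩⟩ hcl z (hXS hz)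
      exact (mem_filter.1 this).2 hz
    push_neg at hT
    obtain ⟨u₀, hu₀T, hu₀n⟩ := hT
    have hu₀S := (mem_filter.1 hu₀T).1
    have hu₀X := (mem_filter.1 hu₀T).2
    have hnm := nxt_mem (herase u₀ hu₀S)
    have hnX : nxt S u₀ ∈ Z₁ ∩ Z₂ := by
      by_contra h
      exact hu₀n (mem_filter.2 ⟨hnm, h⟩)
    have hcu₀ : cross u₀ := hXcross u₀ hu₀S (Or.inr hnX)
    have hsub : insert u₀ (Z₁ ∩ Z₂) ⊆ S.filter cross := by
      intro y hy
      rcases mem_insert.1 hy with rfl | hy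
      · exact mem_filter.2 ⟨hu₀S, hcu₀⟩
      · exact mem_filter.2 ⟨hXS hy, hXcross y (hXS hy) (Or.inl hy)⟩
    calc C + 1 = (insert u₀ (Z₁ ∩ Z₂)).card := by
          rw [card_insert_of_notMem hu₀X]
      _ ≤ K := card_le_card hsub
  -- Structural fact C' : if everything is in the intersection
  have factC : (∀ v ∈ S, v ∈ Z₁ ∩ Z₂) → K = S.card ∧ C = S.card := by
    intro hall
    constructor
    · rw [hKdef]
      congr 1
      apply filter_true_of_mem
      intro v hv
      exact hXcross v hv (Or.inl (hall v hv))
    · rw [hCdef]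
      exact le_antisymm hCm (card_le_card (fun z hz => hall z hz))
  -- now the arithmetic, carried out in ℕ
  have key : min (2 * (Z₁.card + Z₂.card) + 2 * r - 6) (r * (Z₁.card + Z₂.card) / 2)
      ≤ N + 3 := by
    rcases Nat.lt_or_ge r 4 with hr4 | hr4
    · -- r = 2 or r = 3 : prove the second bound
      refine le_trans (min_le_right _ _) ?_
      interval_cases r
      · -- r = 2
        omega
      · -- r = 3
        rcases Nat.eq_zero_or_pos C with hC0 | hC1
        · omega
        · by_cases hall : ∀ v ∈ S, v ∈ Z₁ ∩ Z₂
          · obtain ⟨hK, hC⟩ := factC hall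
            omega
          · push_neg at hall
            have hKC := factB hC1 hall
            omega
    · -- r ≥ 4
      by_cases hall : ∀ v ∈ S, v ∈ Z₁ ∩ Z₂
      · -- second bound : n ≥ r * s / 2
        refine le_trans (min_le_right _ _) ?_
        obtain ⟨hK, hC⟩ := factC hall
        have hs2 : Z₁.card + Z₂.card = 2 * S.card := by omega
        rw [hs2, show r * (2 * S.card) = 2 * (r * S.card) by ring,
          Nat.mul_div_cancel_left _ (by norm_num : 0 < 2)]
        rw [hK] at hsum
        exact le_trans (Nat.le_add_right _ _) hsum
      · push_neg at hall
        -- first bound : n ≥ 2s + 2r - 6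
        refine le_trans (min_le_left _ _) ?_
        have hsplit : (r - 2) * K + 2 * K ≤ N + 3 - 2 * K' := by
          have : (r - 2) * K + 2 * K = r * K := by
            rw [← Nat.add_mul, Nat.sub_add_cancel hr]
          omega
        rcases Nat.eq_zero_or_pos C with hC0 | hC1
        · have hK2 := factA hC0
          have h1 : (r - 2) * 2 ≤ (r - 2) * K := Nat.mul_le_mul_left _ hK2
          omega
        · have hKC := factB hC1 hall
          have h1 : (r - 2) * (C + 1) ≤ (r - 2) * K := Nat.mul_le_mul_left _ hKC
          have h2 : (r - 2) * (C + 1) = (r - 4) * (C + 1) + 2 * (C + 1) := by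
            rw [← Nat.add_mul]
            congr 1
            omega
          have h3 : (r - 4) * 2 ≤ (r - 4) * (C + 1) :=
            Nat.mul_le_mul_left _ (by omega : 2 ≤ C + 1)
          omega
  exact_mod_cast key
end

section
/- Let C be a cycle and (Z₁, Z₂, Z₃) a nontrivial (C, r)-scheme with |Z₁| = 1. Then |V(C)| ≥ min{2(|Z₁|+|Z₂|+|Z₃|) + 3r − 12, r(|Z₁|+|Z₂|+|Z₃| − 1)/2}. -/
open SimpleGraph Finset Fin.NatCast

lemma cycle_adj_succ {n : ℕ} (hn : 2 ≤ n) [NeZero n] (u : Fin n) :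
    (cycleGraph n).Adj u (u + 1) := by
  rw [cycleGraph_adj']
  right
  rw [add_sub_cancel_left]
  have h : (1 : Fin n).val = 1 % n := rfl
  rw [h]
  exact Nat.mod_eq_of_lt (by omega)

lemma cycle_walk {n : ℕ} (hn : 2 ≤ n) [NeZero n] (u : Fin n) (d : ℕ) :
    ∃ w : (cycleGraph n).Walk u (u + (d : Fin n)), w.length = d := by
  induction d with
  | zero =>
    exact ⟨Walk.nil.copy rfl (by simp), by simp⟩
  | succ d ih =>
    obtain ⟨w, hw⟩ := ih
    have hadj : (cycleGraph n).Adj (u + (d : Fin n)) (u + ((d+1 : ℕ) : Fin n)) := by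
      have h2 : ((d+1 : ℕ) : Fin n) = (d : Fin n) + 1 := by push_cast; ring
      rw [h2, ← add_assoc]
      exact cycle_adj_succ hn _
    exact ⟨w.concat hadj, by simp [hw]⟩

lemma cycle_dist_le {n : ℕ} (hn : 2 ≤ n) [NeZero n] (x y : Fin n) :
    (cycleGraph n).dist x y ≤ ((y - x).val : ℕ) := by
  obtain ⟨w, hw⟩ := cycle_walk hn x ((y - x).val : ℕ)
  have h1 : x + (((y - x).val : ℕ) : Fin n) = y := by
    rw [Fin.cast_val_eq_self]; abel
  calc (cycleGraph n).dist x y ≤ (w.copy rfl h1).length := SimpleGraph.dist_le _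
    _ = (y - x).val := by simpa using hw

set_option maxHeartbeats 2000000 in
/-- If `(Z 0, Z 1, Z 2)` is a nontrivial `(C, r)`-scheme on a cycle `C` with `n`
vertices and `|Z 0| = 1`, then
`n ≥ min{2 Σᵢ |Z i| + 3r − 12, r (Σᵢ |Z i| − 1)/2}`. -/
theorem cycle_scheme_three (n r : ℕ) (hn : 3 ≤ n) (hr : 2 ≤ r)
    (Z : Fin 3 → Finset (Fin n)) (hZ1 : (Z 0).card = 1)
    (hsame : ∀ i, ∀ x ∈ Z i, ∀ y ∈ Z i, x ≠ y → 2 ≤ (cycleGraph n).dist x y)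
    (hcross : ∀ i j, i ≠ j → ∀ x ∈ Z i, ∀ y ∈ Z j, x ≠ y →
      r ≤ (cycleGraph n).dist x y)
    (hsdr : ∃ ξ : Fin 3 → Fin n, Function.Injective ξ ∧ ∀ i, ξ i ∈ Z i) :
    (n : ℚ) ≥ min (2 * (∑ i, (Z i).card) + 3 * r - 12)
      (r * ((∑ i, (Z i).card) - 1) / 2) := by
  classical
  haveI : NeZero n := ⟨by omega⟩
  obtain ⟨ξ, hξinj, hξmem⟩ := hsdr
  set U : Finset (Fin n) := Z 0 ∪ Z 1 ∪ Z 2 with hUdef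
  have hZU : ∀ i, Z i ⊆ U := by
    intro i
    fin_cases i
    · exact (subset_union_left).trans subset_union_left
    · exact (subset_union_right).trans subset_union_left
    · exact subset_union_right
  have hUZ : ∀ x ∈ U, ∃ i, x ∈ Z i := by
    intro x hx
    rw [hUdef] at hx
    simp only [mem_union] at hx
    rcases hx with (h | h) | h
    exacts [⟨0, h⟩, ⟨1, h⟩, ⟨2, h⟩]
  obtain ⟨k, hk⟩ : ∃ k, U.card = k := ⟨U.card, rfl⟩
  have hk3 : 3 ≤ k := by
    rw [← hk]
    calc 3 = (Finset.univ : Finset (Fin 3)).card := by simp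
    _ ≤ U.card := Finset.card_le_card_of_injOn ξ
        (fun i _ => hZU i (hξmem i)) (fun a _ b _ h => hξinj h)
  have hkpos : 0 < k := by omega
  set e := U.orderIsoOfFin hk with hedef
  set f : ℕ → Fin n := fun i => (e ⟨i % k, Nat.mod_lt i hkpos⟩ : Fin n) with hfdef
  -- basic properties of f
  have hfmem : ∀ i, f i ∈ U := fun i => (e _).2
  have hfmod : ∀ a b, a % k = b % k → f a = f b := by
    intro a b h
    simp only [hfdef, h]
  have hfinj : ∀ i j, i < k → j < k → f i = f j → i = j := by
    intro i j hi hj h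
    rw [hfdef] at h
    have h2 : (⟨i % k, Nat.mod_lt i hkpos⟩ : Fin k) = ⟨j % k, Nat.mod_lt j hkpos⟩ :=
      e.injective (Subtype.coe_injective h)
    have h3 := Fin.mk.inj_iff.mp h2
    rwa [Nat.mod_eq_of_lt hi, Nat.mod_eq_of_lt hj] at h3
  have hflt : ∀ i j, i < j → j < k → f i < f j := by
    intro i j hij hj
    rw [hfdef]
    have h2 : (⟨i % k, Nat.mod_lt i hkpos⟩ : Fin k) < ⟨j % k, Nat.mod_lt j hkpos⟩ := by
      simp only [Fin.mk_lt_mk]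
      rwa [Nat.mod_eq_of_lt (by omega), Nat.mod_eq_of_lt hj]
    exact Subtype.coe_lt_coe.mpr (e.strictMono h2)
  have hmodcancel : ∀ s c, 0 < c → c < k → (s + c) % k ≠ s % k := by
    intro s c hc1 hc2 h
    have h2 : c ≡ 0 [MOD k] := Nat.ModEq.add_left_cancel' s (by rw [Nat.add_zero]; exact h)
    have h3 : k ∣ c := (Nat.modEq_zero_iff_dvd).mp h2
    exact absurd (Nat.le_of_dvd hc1 h3) (by omega)
  have hdistinct : ∀ i, f i ≠ f (i+1) := by
    intro i h
    have h1 : f (i % k) = f ((i+1) % k) := by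
      rw [hfmod (i % k) i (Nat.mod_mod_of_dvd i dvd_rfl),
        hfmod ((i+1) % k) (i+1) (Nat.mod_mod_of_dvd (i+1) dvd_rfl)]
      exact h
    have h2 := hfinj _ _ (Nat.mod_lt i hkpos) (Nat.mod_lt (i+1) hkpos) h1
    exact hmodcancel i 1 (by omega) (by omega) (h2.symm)
  have hfsucc : ∀ i, f (i % k + 1) = f (i + 1) := by
    intro i
    apply hfmod
    conv_lhs => rw [Nat.add_mod, Nat.mod_mod_of_dvd _ dvd_rfl]
    rw [← Nat.add_mod]
  have hfsurj : ∀ x ∈ U, ∃ i, i < k ∧ f i = x := by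
    intro x hx
    obtain ⟨i, hi⟩ := e.surjective ⟨x, hx⟩
    exact ⟨i.1, i.2, by rw [hfdef]; simp only [Nat.mod_eq_of_lt i.2, Fin.eta, hi]⟩
  -- the gap function
  set g : ℕ → ℕ := fun i => (f (i+1) - f i).val with hgdef
  have hsum : ∑ i ∈ Finset.range k, g i = n := by
    have key : ∀ i, (g i : ℤ) =
        ((f (i+1)).val : ℤ) - (f i).val + (if f i ≤ f (i+1) then 0 else n) := by
      intro i
      rw [hgdef]
      exact_mod_cast Fin.intCast_val_sub_eq_sub_add_ite (f (i+1)) (f i)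
    have hz : (∑ i ∈ Finset.range k, (g i : ℤ)) = n := by
      have hksplit : k = (k-1) + 1 := by omega
      rw [hksplit, Finset.sum_range_succ]
      have h1 : ∑ i ∈ Finset.range (k-1), (g i : ℤ)
          = ∑ i ∈ Finset.range (k-1), (((f (i+1)).val : ℤ) - (f i).val) := by
        refine Finset.sum_congr rfl (fun i hi => ?_)
        rw [key i, if_pos (le_of_lt (hflt i (i+1) (by omega)
          (by have := Finset.mem_range.mp hi; omega)))]; simp
      rw [h1, Finset.sum_range_sub (fun i => ((f i).val : ℤ)), key (k-1)]
      have hlast : f ((k-1)+1) = f 0 := by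
        apply hfmod
        rw [← hksplit, Nat.mod_self, Nat.zero_mod]
      rw [hlast, if_neg (not_le.mpr (hflt 0 (k-1) (by omega) (by omega)))]
      ring
    exact_mod_cast (by push_cast at hz ⊢; exact hz : ((∑ i ∈ Finset.range k, g i : ℕ) : ℤ) = n)
  -- red pairs
  set Red : Fin n → Fin n → Prop :=
    fun x y => ∃ i j, i ≠ j ∧ x ∈ Z i ∧ y ∈ Z j with hRdef
  have hgap_red : ∀ i, Red (f i) (f (i+1)) → r ≤ g i := by
    intro i ⟨a, b, hab, hxa, hyb⟩
    calc r ≤ (cycleGraph n).dist (f i) (f (i+1)) :=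
          hcross a b hab _ hxa _ hyb (hdistinct i)
      _ ≤ g i := cycle_dist_le (by omega) _ _
  have hgap_two : ∀ i, ¬ Red (f i) (f (i+1)) → 2 ≤ g i := by
    intro i hnred
    obtain ⟨a, hxa⟩ := hUZ _ (hfmem i)
    obtain ⟨b, hyb⟩ := hUZ _ (hfmem (i+1))
    have hab : a = b := by
      by_contra hne
      exact hnred ⟨a, b, hne, hxa, hyb⟩
    subst hab
    calc 2 ≤ (cycleGraph n).dist (f i) (f (i+1)) :=
          hsame a _ hxa _ hyb (hdistinct i)
      _ ≤ g i := cycle_dist_le (by omega) _ _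
  set R : Finset ℕ := (Finset.range k).filter (fun i => Red (f i) (f (i+1)))
    with hRsdef
  obtain ⟨t, ht⟩ : ∃ t, R.card = t := ⟨R.card, rfl⟩
  have htk : t ≤ k := by
    rw [← ht]
    exact (Finset.card_filter_le _ _).trans (by simp)
  -- core counting bound
  have hcore : r * t + 2 * (k - t) ≤ n := by
    have hsplit := Finset.sum_filter_add_sum_filter_not (Finset.range k)
      (fun i => Red (f i) (f (i+1))) g
    have hcc := Finset.card_filter_add_card_filter_not
      (s := Finset.range k) (p := fun i => Red (f i) (f (i+1)))
    rw [Finset.card_range, ← hRsdef, ht] at hcc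
    have hA : r * t ≤ ∑ i ∈ R, g i := by
      calc r * t = t * r := Nat.mul_comm _ _
        _ = ∑ _i ∈ R, r := by rw [Finset.sum_const, ht, smul_eq_mul]
        _ ≤ ∑ i ∈ R, g i :=
          Finset.sum_le_sum (fun i hi => hgap_red i (Finset.mem_filter.mp hi).2)
    have hB : 2 * (k - t) ≤
        ∑ i ∈ (Finset.range k).filter (fun i => ¬ Red (f i) (f (i+1))), g i := by
      calc 2 * (k - t) = (k - t) * 2 := Nat.mul_comm _ _
        _ = ∑ _i ∈ (Finset.range k).filter (fun i => ¬ Red (f i) (f (i+1))), 2 := by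
            rw [Finset.sum_const, smul_eq_mul]
            congr 1
            omega
        _ ≤ _ :=
          Finset.sum_le_sum (fun i hi => hgap_two i (Finset.mem_filter.mp hi).2)
    calc r * t + 2 * (k - t)
        ≤ (∑ i ∈ R, g i) +
          ∑ i ∈ (Finset.range k).filter (fun i => ¬ Red (f i) (f (i+1))), g i :=
          add_le_add hA hB
      _ = ∑ i ∈ Finset.range k, g i := by rw [hRsdef]; exact hsplit
      _ = n := hsum
  -- multi vertices
  set M : Finset (Fin n) :=
    U.filter (fun x => ∃ i j, i ≠ j ∧ x ∈ Z i ∧ x ∈ Z j) with hMdef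
  obtain ⟨m, hm⟩ : ∃ m, M.card = m := ⟨M.card, rfl⟩
  have hmk : m ≤ k := by
    rw [← hm, ← hk]; exact Finset.card_le_card (Finset.filter_subset _ _)
  obtain ⟨p, hp⟩ := Finset.card_eq_one.mp hZ1
  have hpZ0 : p ∈ Z 0 := by rw [hp]; exact Finset.mem_singleton_self p
  have hpU : p ∈ U := hZU 0 hpZ0
  have honly : ∀ y, y ∈ Z 0 → y = p := fun y hy => by
    rwa [hp, Finset.mem_singleton] at hy
  have hMred : ∀ x y : Fin n, x ∈ U → y ∈ U → x ∈ M ∨ y ∈ M → Red x y := by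
    intro x y hx hy hcase
    rcases hcase with hxm | hym
    · obtain ⟨a, b, hab, ha, hb⟩ := (Finset.mem_filter.mp hxm).2
      obtain ⟨l, hyl⟩ := hUZ y hy
      by_cases h : a = l
      · exact ⟨b, l, by rw [← h]; exact (Ne.symm hab), hb, hyl⟩
      · exact ⟨a, l, h, ha, hyl⟩
    · obtain ⟨a, b, hab, ha, hb⟩ := (Finset.mem_filter.mp hym).2
      obtain ⟨l, hxl⟩ := hUZ x hx
      by_cases h : l = a
      · exact ⟨l, b, by rw [h]; exact hab, hxl, hb⟩
      · exact ⟨l, a, h, hxl, ha⟩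
  set Mdx : Finset ℕ := (Finset.range k).filter (fun i => f i ∈ M) with hMdxdef
  have hMdxR : Mdx ⊆ R := by
    intro i hi
    obtain ⟨hik, him⟩ := Finset.mem_filter.mp hi
    exact Finset.mem_filter.mpr
      ⟨hik, hMred _ _ (hfmem i) (hfmem (i+1)) (Or.inl him)⟩
  have hMdxcard : Mdx.card = m := by
    rw [← hm]
    apply Finset.card_bij (fun i _ => f i)
    · exact fun i hi => (Finset.mem_filter.mp hi).2
    · intro i hi j hj hij
      exact hfinj i j (Finset.mem_range.mp (Finset.mem_filter.mp hi).1)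
        (Finset.mem_range.mp (Finset.mem_filter.mp hj).1) hij
    · intro x hx
      obtain ⟨idx, hidxk, hfidx⟩ := hfsurj x (Finset.filter_subset _ _ hx)
      exact ⟨idx, Finset.mem_filter.mpr
        ⟨Finset.mem_range.mpr hidxk, by rw [hfidx]; exact hx⟩, hfidx⟩
  have hMR : t ≥ m := by
    rw [← ht, ← hMdxcard]
    exact Finset.card_le_card hMdxR
  have hprop : ∀ (P : Fin n → Prop), (∀ i, i < k → ¬ P (f i) → ¬ P (f (i+1))) →
      ∀ i₀, ¬ P (f i₀) → ∀ x ∈ U, ¬ P x := by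
    intro P hstep i₀ hi₀ x hx hPx
    have key : ∀ d, ¬ P (f (i₀ % k + d)) := by
      intro d
      induction d with
      | zero =>
        rw [Nat.add_zero, hfmod (i₀ % k) i₀ (Nat.mod_mod_of_dvd i₀ dvd_rfl)]
        exact hi₀
      | succ d ih =>
        have hq : ¬ P (f ((i₀ % k + d) % k)) := by
          rw [hfmod _ _ (Nat.mod_mod_of_dvd _ dvd_rfl)]; exact ih
        have h2 := hstep _ (Nat.mod_lt _ hkpos) hq
        rw [hfsucc] at h2
        exact h2
    obtain ⟨idx, hidx, hfx⟩ := hfsurj x hx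
    have hd : f (i₀ % k + (idx + k - i₀ % k)) = x := by
      have harith : i₀ % k + (idx + k - i₀ % k) = idx + k := by
        have := Nat.mod_lt i₀ hkpos; omega
      rw [harith, hfmod (idx + k) idx (by rw [Nat.add_mod_right]), hfx]
    rw [← hd] at hPx
    exact key _ hPx
  -- the index of p and its two red gaps
  obtain ⟨ip, hipk, hfip⟩ := hfsurj p hpU
  have hnot0 : ∀ i : ℕ, f i ≠ p → ∀ l, f i ∈ Z l → l ≠ 0 := by
    intro i hne l hl h0
    subst h0
    exact hne (honly _ hl)
  set jp := (ip + k - 1) % k with hjpdef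
  have hjpk : jp < k := Nat.mod_lt _ hkpos
  have hjpsucc : f (jp + 1) = p := by
    rw [hjpdef, hfsucc, show ip + k - 1 + 1 = ip + k by omega,
      hfmod (ip + k) ip (by rw [Nat.add_mod_right]), hfip]
  have hfjpne : f jp ≠ p := by rw [← hjpsucc]; exact hdistinct jp
  have hipR : ip ∈ R := by
    refine Finset.mem_filter.mpr ⟨Finset.mem_range.mpr hipk, ?_⟩
    obtain ⟨l, hl⟩ := hUZ _ (hfmem (ip+1))
    have hlne : l ≠ 0 :=
      hnot0 (ip+1) (by rw [← hfip]; exact (hdistinct ip).symm) l hl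
    exact ⟨0, l, Ne.symm hlne, by rw [hfip]; exact hpZ0, hl⟩
  have hjpR : jp ∈ R := by
    refine Finset.mem_filter.mpr ⟨Finset.mem_range.mpr hjpk, ?_⟩
    obtain ⟨l, hl⟩ := hUZ _ (hfmem jp)
    exact ⟨l, 0, hnot0 jp hfjpne l hl, hl, by rw [hjpsucc]; exact hpZ0⟩
  have hipjp : ip ≠ jp := by
    intro h
    apply hfjpne
    rw [← h, hfip]
  have hT3 : 3 ≤ t := by
    have hthird : ∃ i, i < k ∧ i ≠ ip ∧ i ≠ jp ∧ Red (f i) (f (i+1)) := by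
      by_contra hc
      push_neg at hc
      have hchain : ∀ d, d + 2 ≤ k → ∀ a, f (ip + 1 + d) ∈ Z a → f (ip + 1) ∈ Z a := by
        intro d
        induction d with
        | zero => intro _ a ha; simpa using ha
        | succ d ih =>
          intro hdk a ha
          have hq1 : f ((ip + 1 + d) % k) = f (ip + 1 + d) :=
            hfmod _ _ (Nat.mod_mod_of_dvd _ dvd_rfl)
          have hq2 : f ((ip + 1 + d) % k + 1) = f (ip + 1 + d + 1) := hfsucc _
          have hqip : (ip + 1 + d) % k ≠ ip := by
            intro h
            apply hmodcancel ip (1 + d) (by omega) (by omega)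
            rw [Nat.mod_eq_of_lt hipk, show ip + (1 + d) = ip + 1 + d by omega]
            exact h
          have hqjp : (ip + 1 + d) % k ≠ jp := by
            intro h
            apply hmodcancel (ip + k - 1) (d + 2) (by omega) (by omega)
            rw [show ip + k - 1 + (d + 2) = ip + 1 + d + k by omega,
              Nat.add_mod_right]
            exact h
          have hnred : ¬ Red (f ((ip + 1 + d) % k)) (f ((ip + 1 + d) % k + 1)) :=
            hc _ (Nat.mod_lt _ hkpos) hqip hqjp
          obtain ⟨b, hb⟩ := hUZ _ (hfmem ((ip + 1 + d) % k))
          have hba : b = a := by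
            by_contra hne
            exact hnred ⟨b, a, hne, hb, by rw [hq2]; exact ha⟩
          apply ih (by omega) a
          rw [← hq1]
          rw [hba] at hb
          exact hb
      have hxi0 : ξ 0 = p := honly _ (hξmem 0)
      have hne1 : ξ 1 ≠ p := by
        rw [← hxi0]
        exact fun h => (by decide : (1 : Fin 3) ≠ 0) (hξinj h)
      have hne2 : ξ 2 ≠ p := by
        rw [← hxi0]
        exact fun h => (by decide : (2 : Fin 3) ≠ 0) (hξinj h)
      have hget : ∀ y, y ∈ U → y ≠ p → ∃ d, 1 ≤ d ∧ d + 1 ≤ k ∧ f (ip + d) = y := by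
        intro y hy hyne
        obtain ⟨idx, hidxk, hfidx⟩ := hfsurj y hy
        have hdk : (idx + k - ip) % k < k := Nat.mod_lt _ hkpos
        have hfd : f (ip + (idx + k - ip) % k) = y := by
          have h1 : (ip + (idx + k - ip) % k) % k = idx % k := by
            rw [Nat.add_mod, Nat.mod_mod_of_dvd _ dvd_rfl, ← Nat.add_mod,
              show ip + (idx + k - ip) = idx + k by omega, Nat.add_mod_right]
          rw [hfmod _ idx (by rw [h1, Nat.mod_eq_of_lt hidxk]), hfidx]
        have hd0 : (idx + k - ip) % k ≠ 0 := by
          intro h0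
          rw [h0, Nat.add_zero, hfip] at hfd
          exact hyne hfd.symm
        exact ⟨(idx + k - ip) % k, by omega, by omega, hfd⟩
      obtain ⟨d₁, hd₁1, hd₁k, hfd₁⟩ := hget (ξ 1) (hZU 1 (hξmem 1)) hne1
      obtain ⟨d₂, hd₂1, hd₂k, hfd₂⟩ := hget (ξ 2) (hZU 2 (hξmem 2)) hne2
      have hZ1mem : f (ip + 1) ∈ Z 1 := by
        apply hchain (d₁ - 1) (by omega)
        rw [show ip + 1 + (d₁ - 1) = ip + d₁ by omega, hfd₁]
        exact hξmem 1
      have hZ2mem : f (ip + 1) ∈ Z 2 := by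
        apply hchain (d₂ - 1) (by omega)
        rw [show ip + 1 + (d₂ - 1) = ip + d₂ by omega, hfd₂]
        exact hξmem 2
      obtain ⟨l, hl⟩ := hUZ _ (hfmem (ip + 2))
      have hred1 : Red (f (ip+1)) (f (ip+1+1)) := by
        by_cases h : l = 1
        · exact ⟨2, l, by rw [h]; decide, hZ2mem, hl⟩
        · exact ⟨1, l, Ne.symm h, hZ1mem, hl⟩
      have hq1ip : (ip + 1) % k ≠ ip := by
        intro h
        apply hmodcancel ip 1 (by omega) (by omega)
        rw [Nat.mod_eq_of_lt hipk]
        exact h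
      have hq1jp : (ip + 1) % k ≠ jp := by
        intro h
        apply hmodcancel (ip + k - 1) 2 (by omega) (by omega)
        rw [show ip + k - 1 + 2 = ip + 1 + k by omega, Nat.add_mod_right]
        exact h
      apply hc ((ip + 1) % k) (Nat.mod_lt _ hkpos) hq1ip hq1jp
      rw [hfmod ((ip+1) % k) (ip+1) (Nat.mod_mod_of_dvd _ dvd_rfl), hfsucc]
      exact hred1
    obtain ⟨i₃, hi₃k, hi₃ip, hi₃jp, hi₃red⟩ := hthird
    have hsub : ({ip, jp, i₃} : Finset ℕ) ⊆ R := by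
      intro x hx
      simp only [Finset.mem_insert, Finset.mem_singleton] at hx
      rcases hx with h | h | h <;> subst h
      exacts [hipR, hjpR, Finset.mem_filter.mpr ⟨Finset.mem_range.mpr hi₃k, hi₃red⟩]
    have hcard3 : ({ip, jp, i₃} : Finset ℕ).card = 3 :=
      Finset.card_eq_three.mpr
        ⟨ip, jp, i₃, hipjp, fun h => hi₃ip h.symm, fun h => hi₃jp h.symm, rfl⟩
    rw [← ht, ← hcard3]
    exact Finset.card_le_card hsub
  have hTM1 : m < k → m + 1 ≤ t := by
    intro hmklt
    by_cases hm2 : m ≤ 2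
    · omega
    · have hMne : M.Nonempty := Finset.card_pos.mp (by omega)
      have hss : M ⊂ U := by
        refine Finset.ssubset_iff_subset_ne.mpr ⟨Finset.filter_subset _ _, ?_⟩
        intro h
        rw [h] at hm
        omega
      obtain ⟨x₀, hx₀U, hx₀M⟩ := Finset.exists_of_ssubset hss
      obtain ⟨i₀, hi₀k, hfi₀⟩ := hfsurj x₀ hx₀U
      have htrans : ∃ i, i < k ∧ f i ∉ M ∧ f (i+1) ∈ M := by
        by_contra hc
        push_neg at hc
        obtain ⟨y, hyM⟩ := hMne
        exact hprop (fun z => z ∈ M) hc i₀ (by rw [hfi₀]; exact hx₀M) y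
          (Finset.filter_subset _ _ hyM) hyM
      obtain ⟨i', hi'k, hi'n, hi'm⟩ := htrans
      have hi'R : i' ∈ R := Finset.mem_filter.mpr
        ⟨Finset.mem_range.mpr hi'k, hMred _ _ (hfmem _) (hfmem _) (Or.inr hi'm)⟩
      have hi'Mdx : i' ∉ Mdx := fun h => hi'n (Finset.mem_filter.mp h).2
      have hins : insert i' Mdx ⊆ R := Finset.insert_subset hi'R hMdxR
      have hcard := Finset.card_le_card hins
      rw [Finset.card_insert_of_notMem hi'Mdx, hMdxcard, ht] at hcard
      omega
  -- cardinality counting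
  obtain ⟨S, hS⟩ : ∃ S, ∑ i, (Z i).card = S := ⟨_, rfl⟩
  set c : Fin n → ℕ := fun x => (Finset.univ.filter (fun i => x ∈ Z i)).card
    with hcdef
  have hScount : S = ∑ x ∈ U, c x := by
    rw [← hS]
    have h1 : ∀ i, (Z i).card = ∑ x ∈ U, if x ∈ Z i then 1 else 0 := by
      intro i
      rw [← Finset.card_filter]
      congr 1
      ext x
      simp only [Finset.mem_filter]
      exact ⟨fun h => ⟨hZU i h, h⟩, fun h => h.2⟩
    calc ∑ i, (Z i).card = ∑ i, ∑ x ∈ U, if x ∈ Z i then 1 else 0 := by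
          exact Finset.sum_congr rfl (fun i _ => h1 i)
      _ = ∑ x ∈ U, ∑ i, if x ∈ Z i then 1 else 0 := Finset.sum_comm
      _ = ∑ x ∈ U, c x := by
          refine Finset.sum_congr rfl (fun x _ => ?_)
          simp only [hcdef]
          exact (Finset.card_filter _ _).symm
  have hkS : k ≤ S := by
    rw [hScount, ← hk]
    have : ∀ x ∈ U, 1 ≤ c x := by
      intro x hx
      obtain ⟨i, hi⟩ := hUZ x hx
      exact Finset.card_pos.mpr ⟨i, Finset.mem_filter.mpr ⟨Finset.mem_univ i, hi⟩⟩
    calc U.card = ∑ _x ∈ U, 1 := by rw [Finset.sum_const, smul_eq_mul, Nat.mul_one]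
      _ ≤ ∑ x ∈ U, c x := Finset.sum_le_sum this
  have hSkm : S ≤ k + m + 1 := by
    have hsplit := Finset.sum_filter_add_sum_filter_not U
      (fun x => ∃ i j, i ≠ j ∧ x ∈ Z i ∧ x ∈ Z j) c
    have hMbound : ∑ x ∈ M, c x ≤ 2 * m + 1 := by
      have hb : ∀ x ∈ M, c x ≤ if x = p then 3 else 2 := by
        intro x hx
        by_cases hxp : x = p
        · rw [if_pos hxp, hcdef]
          calc (Finset.univ.filter (fun i => x ∈ Z i)).card
              ≤ (Finset.univ : Finset (Fin 3)).card := Finset.card_le_card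
                (Finset.filter_subset _ _)
            _ = 3 := by simp
        · rw [if_neg hxp]
          by_contra hlt
          push_neg at hlt
          simp only [hcdef] at hlt
          have h3 : (Finset.univ.filter (fun i => x ∈ Z i)).card = 3 := by
            have := Finset.card_le_card
              (Finset.filter_subset (fun i => x ∈ Z i) (Finset.univ : Finset (Fin 3)))
            simp only [Finset.card_univ, Fintype.card_fin] at this
            omega
          have hfull : (Finset.univ.filter (fun i => x ∈ Z i))
              = (Finset.univ : Finset (Fin 3)) := by
            apply Finset.eq_of_subset_of_card_le (Finset.filter_subset _ _)
            simp [h3]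
          have h0 : (0 : Fin 3) ∈ Finset.univ.filter (fun i => x ∈ Z i) := by
            rw [hfull]; exact Finset.mem_univ _
          exact hxp (honly x (Finset.mem_filter.mp h0).2)
      calc ∑ x ∈ M, c x ≤ ∑ x ∈ M, (if x = p then 3 else 2) :=
            Finset.sum_le_sum hb
        _ = ∑ x ∈ M, (2 + if x = p then 1 else 0) := by
            refine Finset.sum_congr rfl (fun x _ => ?_)
            by_cases h : x = p <;> simp [h]
        _ = 2 * m + ∑ x ∈ M, (if x = p then 1 else 0) := by
            rw [Finset.sum_add_distrib, Finset.sum_const, smul_eq_mul, hm,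
              Nat.mul_comm]
        _ ≤ 2 * m + 1 := by
            rw [Finset.sum_ite_eq' M p (fun _ => 1)]
            by_cases h : p ∈ M <;> simp [h]
    have hSbound : ∑ x ∈ U.filter (fun x => ¬ ∃ i j, i ≠ j ∧ x ∈ Z i ∧ x ∈ Z j), c x
        ≤ k - m := by
      have hcc : (U.filter (fun x => ¬ ∃ i j, i ≠ j ∧ x ∈ Z i ∧ x ∈ Z j)).card
          = k - m := by
        rw [Finset.filter_not, ← hMdef, Finset.card_sdiff_of_subset (Finset.filter_subset _ _), hk, hm]
      have hone : ∀ x ∈ U.filter (fun x => ¬ ∃ i j, i ≠ j ∧ x ∈ Z i ∧ x ∈ Z j),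
          c x ≤ 1 := by
        intro x hx
        obtain ⟨hxU, hxn⟩ := Finset.mem_filter.mp hx
        by_contra hlt
        push_neg at hlt
        obtain ⟨a, ha, b, hb, hab⟩ := Finset.one_lt_card.mp hlt
        exact hxn ⟨a, b, hab, (Finset.mem_filter.mp ha).2, (Finset.mem_filter.mp hb).2⟩
      calc ∑ x ∈ U.filter (fun x => ¬ ∃ i j, i ≠ j ∧ x ∈ Z i ∧ x ∈ Z j), c x
          ≤ ∑ _x ∈ U.filter (fun x => ¬ ∃ i j, i ≠ j ∧ x ∈ Z i ∧ x ∈ Z j), 1 :=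
            Finset.sum_le_sum hone
        _ = k - m := by rw [Finset.sum_const, smul_eq_mul, Nat.mul_one]; exact hcc
    rw [hMdef] at hMbound
    rw [hScount, ← hsplit]
    omega
  -- final arithmetic
  have htq : ((r : ℚ) * t + 2 * ((k : ℚ) - t)) ≤ n := by
    have h := hcore
    have h2 : ((r * t + 2 * (k - t) : ℕ) : ℚ) ≤ n := by exact_mod_cast h
    rwa [Nat.cast_add, Nat.cast_mul, Nat.cast_mul, Nat.cast_sub htk,
      Nat.cast_ofNat] at h2
  have hmq : (m : ℚ) ≤ t := by exact_mod_cast hMR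
  have h3q : (3 : ℚ) ≤ t := by exact_mod_cast hT3
  have hrq : (2 : ℚ) ≤ r := by exact_mod_cast hr
  have hkSq : (k : ℚ) ≤ S := by exact_mod_cast hkS
  have hSkmq : (S : ℚ) ≤ k + m + 1 := by exact_mod_cast hSkm
  have hmkq : (m : ℚ) ≤ k := by exact_mod_cast hmk
  have htkq : (t : ℚ) ≤ k := by exact_mod_cast htk
  have hk3q : (3 : ℚ) ≤ k := by exact_mod_cast hk3
  rw [hS]
  rw [ge_iff_le, Nat.cast_le]
  -- it now suffices to prove the ℕ inequality
  have hfirst : (2*(S:ℚ) + 3*r - 12 ≤ n) → min (2*S+3*r-12) (r*(S-1)/2) ≤ n := by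
    intro hQ
    refine le_trans (Nat.min_le_left _ _) ?_
    have hN : 2*S + 3*r ≤ n + 12 := by exact_mod_cast (by linarith : 2*(S:ℚ) + 3*r ≤ (n:ℚ) + 12)
    omega
  have hsecond : ((r:ℚ) * ((S:ℚ) - 1) / 2 ≤ n) → min (2*S+3*r-12) (r*(S-1)/2) ≤ n := by
    intro hQ
    refine le_trans (Nat.min_le_right _ _) ?_
    have hN : r * (S - 1) ≤ 2 * n := by
      have hc : ((r * (S-1) : ℕ) : ℚ) ≤ 2*n := by
        rw [Nat.cast_mul, Nat.cast_sub (by omega : 1 ≤ S)]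
        push_cast
        linarith
      exact_mod_cast hc
    calc r * (S-1) / 2 ≤ 2 * n / 2 := Nat.div_le_div_right hN
      _ = n := by omega
  by_cases hr4 : r ≤ 4
  · have hr4q : (r : ℚ) ≤ 4 := by exact_mod_cast hr4
    apply hsecond
    nlinarith [mul_nonneg (sub_nonneg.mpr hrq) (sub_nonneg.mpr hmq),
      mul_nonneg (by linarith : (0:ℚ) ≤ 4 - r) (sub_nonneg.mpr hmkq),
      mul_nonneg (by linarith : (0:ℚ) ≤ (r:ℚ)) (by linarith : (0:ℚ) ≤ (k:ℚ) + m + 1 - S)]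
  · push_neg at hr4
    have hr5q : (5 : ℚ) ≤ r := by exact_mod_cast hr4
    by_cases hS4 : S ≤ k + 3
    · have hS4q : (S : ℚ) ≤ k + 3 := by exact_mod_cast hS4
      apply hfirst
      nlinarith [mul_nonneg (by linarith : (0:ℚ) ≤ (r:ℚ) - 2) (sub_nonneg.mpr h3q)]
    · push_neg at hS4
      have hS4q : (k : ℚ) + 4 ≤ S := by exact_mod_cast hS4
      by_cases hmk2 : m < k
      · have hm1t : (m : ℚ) + 1 ≤ t := by exact_mod_cast (hTM1 hmk2)
        apply hfirst
        nlinarith [mul_nonneg (by linarith : (0:ℚ) ≤ (r:ℚ) - 5) (sub_nonneg.mpr h3q),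
          mul_nonneg (by norm_num : (0:ℚ) ≤ (3:ℚ))
            (by linarith : (0:ℚ) ≤ (t:ℚ) - (S - k - 2))]
      · have hmkeq : (m : ℚ) = k := by
          have h : m = k := by omega
          exact_mod_cast h
        apply hsecond
        nlinarith [mul_nonneg (by linarith : (0:ℚ) ≤ (r:ℚ))
          (by linarith : (0:ℚ) ≤ 2*(k:ℚ) + 1 - S)]
end

section
/- Let Q be a path and (Z₁, Z₂) a nontrivial (Q, r)-scheme. Then |V(Q)| ≥ min{2(|Z₁| + |Z₂|) + r − 5, r(|Z₁| + |Z₂| − 2)/2 + 1}. -/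
open SimpleGraph Finset

lemma pathGraph_walk (n : ℕ) : ∀ (d : ℕ) (u v : Fin n), (u : ℕ) + d = (v : ℕ) →
    ∃ p : (pathGraph n).Walk u v, p.length = d := by
  intro d
  induction d with
  | zero =>
    intro u v h
    have huv : u = v := Fin.ext (by omega)
    subst huv
    exact ⟨Walk.nil, rfl⟩
  | succ d ih =>
    intro u v h
    have h1 : (u : ℕ) + 1 < n := by omega
    obtain ⟨p, hp⟩ := ih ⟨(u : ℕ) + 1, h1⟩ v (by simp; omega)
    exact ⟨Walk.cons (pathGraph_adj.mpr (Or.inl rfl)) p, by simp [hp]⟩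

lemma pathGraph_dist_le {n : ℕ} (u v : Fin n) (h : u ≤ v) :
    (pathGraph n).dist u v ≤ (v : ℕ) - (u : ℕ) := by
  obtain ⟨p, hp⟩ := pathGraph_walk n ((v : ℕ) - (u : ℕ)) u v (by
    have := Fin.le_iff_val_le_val.mp h; omega)
  exact hp ▸ SimpleGraph.dist_le p

/-- If `(Z₁, Z₂)` is a nontrivial `(Q, r)`-scheme on a path `Q` with `n` vertices, then
`n ≥ min{2(|Z₁| + |Z₂|) + r − 5, r(|Z₁| + |Z₂| − 2)/2 + 1}`. -/
theorem path_scheme_two (n r : ℕ) (hn : 1 ≤ n) (hr : 2 ≤ r)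
    (Z₁ Z₂ : Finset (Fin n))
    (h₁ : ∀ x ∈ Z₁, ∀ y ∈ Z₁, x ≠ y → 2 ≤ (pathGraph n).dist x y)
    (h₂ : ∀ x ∈ Z₂, ∀ y ∈ Z₂, x ≠ y → 2 ≤ (pathGraph n).dist x y)
    (hcross : ∀ x ∈ Z₁, ∀ y ∈ Z₂, x ≠ y → r ≤ (pathGraph n).dist x y)
    (hsdr : ∃ x₁ ∈ Z₁, ∃ x₂ ∈ Z₂, x₁ ≠ x₂) :
    (n : ℚ) ≥ min (2 * (Z₁.card + Z₂.card) + r - 5)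
      (r * (Z₁.card + Z₂.card - 2) / 2 + 1) := by
  classical
  obtain ⟨x₁, hx₁, x₂, hx₂, hx12⟩ := hsdr
  set U : Finset (Fin n) := Z₁ ∪ Z₂ with hU
  set m : ℕ := U.card with hmdef
  have hm2 : 2 ≤ m := by
    have : ({x₁, x₂} : Finset (Fin n)) ⊆ U := by
      intro z hz
      simp only [mem_insert, mem_singleton] at hz
      rcases hz with rfl | rfl
      · exact mem_union_left _ hx₁
      · exact mem_union_right _ hx₂
    calc 2 = ({x₁, x₂} : Finset (Fin n)).card := (Finset.card_pair hx12).symm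
    _ ≤ m := Finset.card_le_card this
  have hmT : m - 1 < m := by omega
  -- the sorted enumeration
  set e : Fin m ↪o Fin n := U.orderEmbOfFin rfl with he
  set v : ℕ → Fin n := fun i => e ⟨min i (m-1), lt_of_le_of_lt (min_le_right _ _) hmT⟩ with hv
  set f : ℕ → ℕ := fun i => (v i : ℕ) with hf
  have hvmem : ∀ i, v i ∈ U := fun i => U.orderEmbOfFin_mem rfl _
  have hmono : Monotone f := by
    intro a b hab
    have : (⟨min a (m-1), lt_of_le_of_lt (min_le_right _ _) hmT⟩ : Fin m)
        ≤ ⟨min b (m-1), lt_of_le_of_lt (min_le_right _ _) hmT⟩ := by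
      simp only [Fin.le_def]; omega
    exact e.le_iff_le.mpr this
  have hvlt : ∀ i, i < m - 1 → v i < v (i+1) := by
    intro i hi
    have : (⟨min i (m-1), lt_of_le_of_lt (min_le_right _ _) hmT⟩ : Fin m)
        < ⟨min (i+1) (m-1), lt_of_le_of_lt (min_le_right _ _) hmT⟩ := by
      simp only [Fin.lt_def]; omega
    exact e.lt_iff_lt.mpr this
  have hsurj : ∀ x ∈ U, ∃ i, i < m ∧ v i = x := by
    intro x hx
    have : x ∈ Set.range (U.orderEmbOfFin rfl) := by
      rw [Finset.range_orderEmbOfFin]; exact hx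
    obtain ⟨i, hi⟩ := this
    refine ⟨(i : ℕ), i.2, ?_⟩
    have : (⟨min (i : ℕ) (m-1), lt_of_le_of_lt (min_le_right _ _) hmT⟩ : Fin m) = i := by
      apply Fin.ext; simp only []; omega
    rw [hv]; simp only []; rw [this]; exact hi
  have hvinj : ∀ i j, i < m → j < m → v i = v j → i = j := by
    intro i j hi hj hij
    have := e.injective hij
    have := Fin.mk.injEq .. ▸ this
    omega
  -- cross predicate
  set cross : ℕ → Prop := fun i => (v i ∈ Z₁ ∧ v (i+1) ∈ Z₂) ∨ (v i ∈ Z₂ ∧ v (i+1) ∈ Z₁)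
    with hcr
  set C : Finset ℕ := (range (m-1)).filter cross with hC
  set c : ℕ := C.card with hc
  set T : Finset ℕ := (range m).filter (fun i => v i ∈ Z₁ ∧ v i ∈ Z₂) with hT
  set t : ℕ := T.card with ht
  have hcle : c ≤ m - 1 := by
    calc c ≤ (range (m-1)).card := Finset.card_le_card (Finset.filter_subset _ _)
    _ = m - 1 := Finset.card_range _
  -- t = card of intersection
  have htcard : t = (Z₁ ∩ Z₂).card := by
    rw [ht]
    apply Finset.card_bij (fun i _ => v i)
    · intro i hi
      simp only [hT, mem_filter] at hi
      exact Finset.mem_inter.mpr ⟨hi.2.1, hi.2.2⟩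
    · intro i hi j hj hij
      simp only [hT, mem_filter, mem_range] at hi hj
      exact hvinj i j hi.1 hj.1 hij
    · intro x hx
      have hxU : x ∈ U := mem_union_left _ (Finset.mem_inter.mp hx).1
      obtain ⟨i, hi, hvi⟩ := hsurj x hxU
      refine ⟨i, ?_, hvi⟩
      simp only [hT, mem_filter, mem_range]
      have := Finset.mem_inter.mp hx
      exact ⟨hi, hvi ▸ this.1, hvi ▸ this.2⟩
  have hmt : m + t = Z₁.card + Z₂.card := by
    rw [htcard, hmdef, hU]
    exact Finset.card_union_add_card_inter _ _
  -- gap lower bounds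
  have hgap : ∀ i ∈ range (m-1), (if cross i then r else 2) ≤ f (i+1) - f i := by
    intro i hi
    rw [mem_range] at hi
    have hlt := hvlt i hi
    have hne : v i ≠ v (i+1) := ne_of_lt hlt
    have hdle : (pathGraph n).dist (v i) (v (i+1)) ≤ f (i+1) - f i :=
      pathGraph_dist_le _ _ (le_of_lt hlt)
    by_cases hcri : cross i
    · rw [if_pos hcri]
      rcases hcri with ⟨ha, hb⟩ | ⟨ha, hb⟩
      · exact le_trans (hcross _ ha _ hb hne) hdle
      · have := hcross _ hb _ ha hne.symm
        rw [SimpleGraph.dist_comm] at this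
        exact le_trans this hdle
    · rw [if_neg hcri]
      have hui := hvmem i
      have hui1 := hvmem (i+1)
      rw [hU, Finset.mem_union] at hui hui1
      rcases hui with h1a | h2a
      · have h1b : v (i+1) ∈ Z₁ := by
          rcases hui1 with h | h
          · exact h
          · exact absurd (Or.inl ⟨h1a, h⟩) hcri
        exact le_trans (h₁ _ h1a _ h1b hne) hdle
      · have h2b : v (i+1) ∈ Z₂ := by
          rcases hui1 with h | h
          · exact absurd (Or.inr ⟨h2a, h⟩) hcri
          · exact h
        exact le_trans (h₂ _ h2a _ h2b hne) hdle
  -- the main counting inequality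
  have hkey : r * c + 2 * ((m - 1) - c) + 1 ≤ n := by
    have htel : ∑ i ∈ range (m-1), (f (i+1) - f i) = f (m-1) - f 0 :=
      Finset.sum_range_tsub hmono (m-1) -- check name/argument order
    have hsum : ∑ i ∈ range (m-1), (if cross i then r else 2)
        ≤ ∑ i ∈ range (m-1), (f (i+1) - f i) := Finset.sum_le_sum hgap
    have hsplit : ∑ i ∈ range (m-1), (if cross i then r else 2)
        = r * c + 2 * ((m-1) - c) := by
      rw [Finset.sum_ite, Finset.sum_const, Finset.sum_const]
      have h1 : ((range (m-1)).filter (fun i => ¬ cross i)).card = (m-1) - c := by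
        have h2 := Finset.card_filter_add_card_filter_not
          (s := range (m-1)) (p := cross)
        rw [Finset.card_range] at h2
        have h3 : ((range (m-1)).filter cross).card = c := by rw [hc, hC]
        omega
      rw [h1]
      simp [hc, hC, mul_comm]
    have hfm : f (m-1) < n := (v (m-1)).2
    calc r * c + 2 * ((m - 1) - c) + 1 = (∑ i ∈ range (m-1), (if cross i then r else 2)) + 1 := by
          rw [hsplit]
    _ ≤ (f (m-1) - f 0) + 1 := by rw [← htel]; exact Nat.add_le_add_right hsum 1
    _ ≤ f (m-1) + 1 := Nat.add_le_add_right (Nat.sub_le _ _) 1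
    _ ≤ n := hfm
  -- c ≥ 1
  have hc1 : 1 ≤ c := by
    by_contra hcon
    have hC0 : ∀ i, i < m - 1 → ¬ cross i := by
      intro i hi hcri
      have : i ∈ C := by
        rw [hC, mem_filter, mem_range]; exact ⟨hi, hcri⟩
      have : 0 < c := Finset.card_pos.mpr ⟨i, this⟩
      omega
    have hstep : ∀ i, i < m - 1 → (v i ∈ Z₁ ∧ v i ∉ Z₂) →
        (v (i+1) ∈ Z₁ ∧ v (i+1) ∉ Z₂) := by
      intro i hi ⟨ha, _⟩
      have hnc := hC0 i hi
      have hb : v (i+1) ∉ Z₂ := fun h => hnc (Or.inl ⟨ha, h⟩)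
      have := hvmem (i+1)
      rw [hU, Finset.mem_union] at this
      exact ⟨this.resolve_right hb, hb⟩
    have hstep2 : ∀ i, i < m - 1 → (v i ∈ Z₂ ∧ v i ∉ Z₁) →
        (v (i+1) ∈ Z₂ ∧ v (i+1) ∉ Z₁) := by
      intro i hi ⟨ha, _⟩
      have hnc := hC0 i hi
      have hb : v (i+1) ∉ Z₁ := fun h => hnc (Or.inr ⟨ha, h⟩)
      have := hvmem (i+1)
      rw [hU, Finset.mem_union] at this
      exact ⟨this.resolve_left hb, hb⟩
    obtain ⟨i₁, hi₁, hvi₁⟩ := hsurj x₁ (mem_union_left _ hx₁)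
    obtain ⟨i₂, hi₂, hvi₂⟩ := hsurj x₂ (mem_union_right _ hx₂)
    have h0 := hvmem 0
    rw [hU, Finset.mem_union] at h0
    by_cases h0z2 : v 0 ∈ Z₂
    · -- if v 0 ∈ Z₂: if also in Z₁ then cross 0. So v 0 ∈ Z₂ \ Z₁.
      have h0z1 : v 0 ∉ Z₁ := by
        intro h0z1
        have h1U := hvmem 1
        rw [hU, Finset.mem_union] at h1U
        refine hC0 0 (by omega) ?_
        rcases h1U with h | h
        · exact Or.inr ⟨h0z2, h⟩
        · exact Or.inl ⟨h0z1, h⟩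
      have hall : ∀ i, i < m → v i ∈ Z₂ ∧ v i ∉ Z₁ := by
        intro i
        induction i with
        | zero => intro _; exact ⟨h0z2, h0z1⟩
        | succ i ih =>
          intro hi
          exact hstep2 i (by omega) (ih (by omega))
      exact (hall i₁ hi₁).2 (hvi₁ ▸ hx₁)
    · have h0z1 : v 0 ∈ Z₁ := h0.resolve_right h0z2
      have hall : ∀ i, i < m → v i ∈ Z₁ ∧ v i ∉ Z₂ := by
        intro i
        induction i with
        | zero => intro _; exact ⟨h0z1, h0z2⟩
        | succ i ih =>
          intro hi
          exact hstep i (by omega) (ih (by omega))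
      exact (hall i₂ hi₂).2 (hvi₂ ▸ hx₂)
  -- intersection vertices force crossings around them
  have hinter_cross_right : ∀ i, i < m - 1 → v i ∈ Z₁ → v i ∈ Z₂ → cross i := by
    intro i hi ha hb
    have := hvmem (i+1)
    rw [hU, Finset.mem_union] at this
    rcases this with h | h
    · exact Or.inr ⟨hb, h⟩
    · exact Or.inl ⟨ha, h⟩
  have hinter_cross_left : ∀ i, i + 1 < m → v (i+1) ∈ Z₁ → v (i+1) ∈ Z₂ → cross i := by
    intro i hi ha hb
    have := hvmem i
    rw [hU, Finset.mem_union] at this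
    rcases this with h | h
    · exact Or.inl ⟨h, hb⟩
    · exact Or.inr ⟨h, ha⟩
  -- t ≤ c + 1
  have htc1 : t ≤ c + 1 := by
    have hsub : T ⊆ insert (m-1) C := by
      intro i hi
      rw [hT, mem_filter, mem_range] at hi
      rcases eq_or_ne i (m-1) with rfl | hne
      · exact Finset.mem_insert_self _ _
      · refine Finset.mem_insert_of_mem ?_
        rw [hC, mem_filter, mem_range]
        exact ⟨by omega, hinter_cross_right i (by omega) hi.2.1 hi.2.2⟩
    calc t ≤ (insert (m-1) C).card := Finset.card_le_card hsub
    _ ≤ c + 1 := Finset.card_insert_le _ _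
  -- if there's a non-cross gap, t ≤ c
  have htc : c < m - 1 → t ≤ c := by
    intro hclt
    have : ∃ j, j < m - 1 ∧ ¬ cross j := by
      by_contra hcon
      push_neg at hcon
      have : range (m-1) ⊆ C := by
        intro j hj
        rw [mem_range] at hj
        rw [hC, mem_filter, mem_range]
        exact ⟨hj, hcon j hj⟩
      have := Finset.card_le_card this
      rw [Finset.card_range] at this
      omega
    obtain ⟨j, hj, hjnc⟩ := this
    have hjno : v j ∉ Z₁ ∨ v j ∉ Z₂ := by
      by_contra hcon
      push_neg at hcon
      exact hjnc (hinter_cross_right j hj hcon.1 hcon.2)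
    have hj1no : v (j+1) ∉ Z₁ ∨ v (j+1) ∉ Z₂ := by
      by_contra hcon
      push_neg at hcon
      exact hjnc (hinter_cross_left j (by omega) hcon.1 hcon.2)
    have hTnotj : ∀ i ∈ T, i ≠ j ∧ i ≠ j + 1 := by
      intro i hi
      rw [hT, mem_filter, mem_range] at hi
      constructor
      · rintro rfl; rcases hjno with h | h
        · exact h hi.2.1
        · exact h hi.2.2
      · rintro rfl; rcases hj1no with h | h
        · exact h hi.2.1
        · exact h hi.2.2
    apply Finset.card_le_card_of_injOn (fun i => if i < j then i else i - 1)
    · intro i hi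
      obtain ⟨hij, hij1⟩ := hTnotj i hi
      rw [hT, Finset.mem_coe, mem_filter, mem_range] at hi
      rw [hC, Finset.mem_coe, mem_filter, mem_range]
      beta_reduce
      by_cases hlt : i < j
      · rw [if_pos hlt]
        exact ⟨by omega, hinter_cross_right i (by omega) hi.2.1 hi.2.2⟩
      · rw [if_neg hlt]
        have hige : j + 2 ≤ i := by omega
        have hieq : i - 1 + 1 = i := by omega
        refine ⟨by omega, ?_⟩
        exact hinter_cross_left (i-1) (by omega) (by rw [hieq]; exact hi.2.1)
          (by rw [hieq]; exact hi.2.2)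
    · intro i hi i' hi' heq
      rw [Finset.mem_coe] at hi hi'
      obtain ⟨hij, hij1⟩ := hTnotj i hi
      obtain ⟨hij', hij1'⟩ := hTnotj i' hi'
      rw [hT, mem_filter, mem_range] at hi hi'
      simp only at heq
      split_ifs at heq <;> omega
  -- final arithmetic
  set q : ℕ := (m - 1) - c with hqdef
  have hmeq : m = c + q + 1 := by omega
  have hnQ : (r:ℚ) * c + 2 * q + 1 ≤ n := by exact_mod_cast hkey
  have hmQ : (m:ℚ) = (c:ℚ) + q + 1 := by exact_mod_cast hmeq
  have hkQ : ((Z₁.card : ℚ) + (Z₂.card : ℚ)) = (m:ℚ) + (t:ℚ) := by exact_mod_cast hmt.symm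
  have hrQ : (2:ℚ) ≤ r := by exact_mod_cast hr
  have hcQ : (1:ℚ) ≤ c := by exact_mod_cast hc1
  have hqQ : (0:ℚ) ≤ q := by positivity
  have hk2 : 2 ≤ Z₁.card + Z₂.card := by omega
  rw [ge_iff_le, Nat.cast_min]
  by_cases hcase : r ≤ 4 ∨ q = 0
  · refine le_trans (min_le_right _ _) ?_
    have hrq : (r:ℚ) * q ≤ 4 * q := by
      rcases hcase with h | h
      · exact mul_le_mul_of_nonneg_right (by exact_mod_cast h) hqQ
      · simp [h]
    have hrt : (r:ℚ) * t ≤ r * ((c:ℚ) + 1) := by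
      apply mul_le_mul_of_nonneg_left _ (by positivity)
      exact_mod_cast htc1
    have hdivle : ((r * (Z₁.card + Z₂.card - 2) / 2 : ℕ) : ℚ)
        ≤ ((r * (Z₁.card + Z₂.card - 2) : ℕ) : ℚ) / 2 := Nat.cast_div_le
    have hexp : ((r * (Z₁.card + Z₂.card - 2) : ℕ) : ℚ)
        = (r:ℚ) * c + r * q + r * t - r := by
      rw [Nat.cast_mul, Nat.cast_sub hk2]
      push_cast
      rw [hkQ, hmQ]; ring
    push_cast
    rw [hexp] at hdivle
    linarith [hnQ, hrq, hrt, hdivle]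
  · push_neg at hcase
    obtain ⟨hr5, hq1⟩ := hcase
    have htcQ : (t:ℚ) ≤ c := by
      have : t ≤ c := htc (by omega)
      exact_mod_cast this
    have hr5Q : (5:ℚ) ≤ r := by exact_mod_cast hr5
    have hprod : 0 ≤ ((r:ℚ) - 4) * ((c:ℚ) - 1) :=
      mul_nonneg (by linarith) (by linarith)
    refine le_trans (min_le_left _ _) ?_
    have hs5 : 5 ≤ 2 * (Z₁.card + Z₂.card) + r := by omega
    have hcasteq : ((2 * (Z₁.card + Z₂.card) + r - 5 : ℕ) : ℚ)
        = 2 * ((Z₁.card : ℚ) + Z₂.card) + r - 5 := by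
      rw [Nat.cast_sub hs5]
      push_cast; ring
    rw [hcasteq]
    nlinarith [hnQ, htcQ, hprod, hkQ, hmQ, hqQ]
end
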